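/- arXiv:2503.06597 — 6 statements merged into one kernel-verified Lean document; each statement's English description precedes it below -/
import Mathlib

section
/- Let x = (x_i)_{i≥1} and y = (y_i)_{i≥1} be one-sided infinite sequences of nonnegative integers with x ≺ y in the alternating order. Then φ(x) ≺ φ(y) in the alternating order; that is, the substitution φ is strictly increasing with respect to the alternating order on one-sided infinite sequences over ℕ. -/
/-- The word `1(00)^k` over `{0,1} ⊆ ℕ`: the letter 1 followed by `k` copies of `00`. -/
def phiWord (k : ℕ) : List ℕ := 1 :: List.replicate (2 * k) 0

/-- The substitution `φ` acting on one-sided infinite sequences over `ℕ`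
(indexed from 0, representing `(x_i)_{i≥1}`) by concatenation
`φ(x) = φ(x_1)φ(x_2)⋯`.  Since each `phiWord` is nonempty, the `n`-th letter of the
infinite concatenation is the `n`-th letter of the join of the first `n+1` words. -/
def phiSeq (x : ℕ → ℕ) : ℕ → ℕ :=
  fun n => ((List.ofFn (fun i : Fin (n + 1) => phiWord (x i))).flatten).getD n 0

/-- The (strict) alternating order on one-sided infinite sequences `(x_i)_{i≥1}`
(indexed from 0 here, so position `k` in the function corresponds to index `k+1`):
`x ≺ y` iff there is `k ≥ 1` with `x_i = y_i` for `i < k` and `(-1)^k (x_k - y_k) < 0`. -/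
def AltLt (x y : ℕ → ℕ) : Prop :=
  ∃ k : ℕ, (∀ i < k, x i = y i) ∧ (-1 : ℤ) ^ (k + 1) * ((x k : ℤ) - (y k : ℤ)) < 0

namespace PhiAux

/-- The concatenation of the first `m` words. -/
def J (x : ℕ → ℕ) (m : ℕ) : List ℕ := (List.ofFn (fun i : Fin m => phiWord (x i))).flatten

lemma J_succ (x : ℕ → ℕ) (m : ℕ) : J x (m + 1) = J x m ++ phiWord (x m) := by
  unfold J
  rw [List.ofFn_succ']
  simp only [List.concat_eq_append, List.flatten_append, List.flatten_cons, List.flatten_nil,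
    List.append_nil, Fin.coe_castSucc, Fin.val_last]

lemma length_phiWord (k : ℕ) : (phiWord k).length = 2 * k + 1 := by
  simp [phiWord]

lemma J_len (x : ℕ → ℕ) (m : ℕ) : ∃ s, (J x m).length = m + 2 * s := by
  induction m with
  | zero => exact ⟨0, rfl⟩
  | succ m ih =>
    obtain ⟨s, hs⟩ := ih
    exact ⟨s + x m, by simp [J_succ, hs, length_phiWord]; ring⟩

lemma le_J_len (x : ℕ → ℕ) (m : ℕ) : m ≤ (J x m).length := by
  obtain ⟨s, hs⟩ := J_len x m; omega

lemma J_prefix (x : ℕ → ℕ) {m m' : ℕ} (h : m ≤ m') : J x m <+: J x m' := by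
  induction m' with
  | zero => rw [Nat.le_zero.mp h]
  | succ m' ih =>
    rcases Nat.lt_or_ge m (m' + 1) with h' | h'
    · exact (ih (Nat.lt_succ_iff.mp h')).trans ⟨phiWord (x m'), (J_succ x m').symm⟩
    · rw [le_antisymm h h']

lemma phiSeq_eq_getD (x : ℕ → ℕ) {m n : ℕ} (hn : n < (J x m).length) :
    phiSeq x n = (J x m).getD n 0 := by
  have h1 : phiSeq x n = (J x (n + 1)).getD n 0 := rfl
  have hn1 : n < (J x (n + 1)).length := lt_of_lt_of_le (Nat.lt_succ_self n) (le_J_len x (n + 1))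
  rw [h1, List.getD_eq_getElem _ _ hn1, List.getD_eq_getElem _ _ hn]
  rcases le_total m (n + 1) with h | h
  · exact ((J_prefix x h).getElem hn).symm
  · exact (J_prefix x h).getElem hn1

/-- The letter at position `j` inside the `k`-th word. -/
lemma phiSeq_word (x : ℕ → ℕ) (k j : ℕ) (hj : j ≤ 2 * x k) :
    phiSeq x ((J x k).length + j) = if j = 0 then 1 else 0 := by
  have hlen : (J x (k + 1)).length = (J x k).length + (2 * x k + 1) := by
    simp [J_succ, length_phiWord]
  have hn : (J x k).length + j < (J x (k + 1)).length := by omega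
  rw [phiSeq_eq_getD x hn, List.getD_eq_getElem _ _ hn]
  have hn' : (J x k).length + j < (J x k ++ phiWord (x k)).length := by rwa [← J_succ]
  rw [List.getElem_of_eq (J_succ x k) hn,
    List.getElem_append_right (Nat.le_add_right _ _)]
  simp only [Nat.add_sub_cancel_left]
  cases j with
  | zero => simp [phiWord]
  | succ j =>
    have hj' : j < 2 * x k := by omega
    simp [phiWord, hj']

end PhiAux

open PhiAux in
/-- the substitution `φ` is strictly increasing with respect to the
alternating order on one-sided infinite sequences over `ℕ`. -/
theorem phiSeq_strictMono_altLt (x y : ℕ → ℕ) (h : AltLt x y) :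
    AltLt (phiSeq x) (phiSeq y) := by
  obtain ⟨k, hpre, hsign⟩ := h
  have hJ : J x k = J y k := by
    unfold J
    exact congrArg List.flatten (congrArg List.ofFn (funext fun i => by rw [hpre i i.isLt]))
  obtain ⟨s, hs⟩ := J_len x k
  have hLy : (J y k).length = (J x k).length := by rw [hJ]
  -- the common prefix below L
  have hcommon : ∀ i < (J x k).length, phiSeq x i = phiSeq y i := by
    intro i hi
    rw [phiSeq_eq_getD x hi, phiSeq_eq_getD y (by rwa [hLy]), hJ]
  have hxlen : (J x (k + 1)).length = (J x k).length + (2 * x k + 1) := by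
    simp [J_succ, length_phiWord]
  have hylen : (J y (k + 1)).length = (J x k).length + (2 * y k + 1) := by
    simp [J_succ, length_phiWord, hLy]
  rcases Nat.even_or_odd k with hk | hk
  · -- k even, so x k > y k
    obtain ⟨t, ht⟩ := hk
    have hab : y k < x k := by
      have h1 : ((-1 : ℤ)) ^ (k + 1) = -1 := (Odd.neg_one_pow ⟨t, by omega⟩)
      rw [h1] at hsign
      have : (y k : ℤ) < x k := by linarith
      exact_mod_cast this
    refine ⟨(J x k).length + 2 * y k + 1, ?_, ?_⟩
    · intro i hi
      rcases Nat.lt_or_ge i (J x k).length with hiL | hiL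
      · exact hcommon i hiL
      · obtain ⟨j, rfl⟩ := Nat.exists_eq_add_of_le hiL
        have hjb : j ≤ 2 * y k := by omega
        have hja : j ≤ 2 * x k := by omega
        rw [phiSeq_word x k j hja, ← hLy, phiSeq_word y k j hjb]
    · have hx0 : phiSeq x ((J x k).length + 2 * y k + 1) = 0 := by
        have := phiSeq_word x k (2 * y k + 1) (by omega)
        simpa [Nat.add_assoc] using this
      have hy1 : phiSeq y ((J x k).length + 2 * y k + 1) = 1 := by
        have := phiSeq_word y (k + 1) 0 (Nat.zero_le _)
        simpa [hylen, Nat.add_assoc] using this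
      rw [hx0, hy1]
      have heven : Even ((J x k).length + 2 * y k + 1 + 1) := ⟨t + s + y k + 1, by omega⟩
      rw [heven.neg_one_pow]
      norm_num
  · -- k odd, so x k < y k
    obtain ⟨t, ht⟩ := hk
    have hab : x k < y k := by
      have h1 : ((-1 : ℤ)) ^ (k + 1) = 1 := (Even.neg_one_pow ⟨t + 1, by omega⟩)
      rw [h1] at hsign
      have : (x k : ℤ) < y k := by linarith
      exact_mod_cast this
    refine ⟨(J x k).length + 2 * x k + 1, ?_, ?_⟩
    · intro i hi
      rcases Nat.lt_or_ge i (J x k).length with hiL | hiL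
      · exact hcommon i hiL
      · obtain ⟨j, rfl⟩ := Nat.exists_eq_add_of_le hiL
        have hja : j ≤ 2 * x k := by omega
        have hjb : j ≤ 2 * y k := by omega
        rw [phiSeq_word x k j hja, ← hLy, phiSeq_word y k j hjb]
    · have hx1 : phiSeq x ((J x k).length + 2 * x k + 1) = 1 := by
        have := phiSeq_word x (k + 1) 0 (Nat.zero_le _)
        simpa [hxlen, Nat.add_assoc] using this
      have hy0 : phiSeq y ((J x k).length + 2 * x k + 1) = 0 := by
        have := phiSeq_word y k (2 * x k + 1) (by omega)
        simpa [hLy, Nat.add_assoc] using this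
      rw [hx1, hy0]
      have hodd : Odd ((J x k).length + 2 * x k + 1 + 1) := ⟨t + s + x k + 1, by omega⟩
      rw [hodd.neg_one_pow]
      norm_num
end

section
/- Let A be a set and d = (d_i)_{i≥1} a sequence in A. Call a finite word over A an odd-prefix concatenation if it is a (possibly empty) concatenation of words of the form d_1 d_2 ⋯ d_{2k+1} (prefixes of d of odd length). Then for every n ≥ 0, the number of odd-prefix concatenations of length n is at most fib(n+1), the (n+1)st Fibonacci number (with fib 1 = fib 2 = 1); in particular it is at most ((1+√5)/2)^n. -/
/-- A finite word `w` over `A` is an *odd-prefix concatenation* (relative to the sequence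
`d = (d_i)_{i≥1}`, indexed from 0 here) if it is a (possibly empty) concatenation of
prefixes `d_1 d_2 ⋯ d_{2k+1}` of `d` of odd length. -/
def OddPrefixConcat {A : Type*} (d : ℕ → A) (w : List A) : Prop :=
  ∃ L : List ℕ, w = (L.map (fun k => List.ofFn (fun i : Fin (2 * k + 1) => d i))).flatten

private def Tset (n : ℕ) : Set (List ℕ) := {L | (L.map (fun k => 2 * k + 1)).sum = n}

private lemma Tset_zero : Tset 0 ⊆ {[]} := by
  intro L hL
  cases L with
  | nil => rfl
  | cons k L' =>
    replace hL : ((k :: L').map (fun k => 2 * k + 1)).sum = 0 := hL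
    rw [List.map_cons, List.sum_cons] at hL
    omega

private lemma Tset_one : Tset 1 ⊆ {[0]} := by
  intro L hL
  cases L with
  | nil => simp [Tset] at hL
  | cons k L' =>
    replace hL : ((k :: L').map (fun k => 2 * k + 1)).sum = 1 := hL
    rw [List.map_cons, List.sum_cons] at hL
    have hk : k = 0 := by omega
    have hs : L' ∈ Tset 0 := by show (L'.map (fun k => 2 * k + 1)).sum = 0; omega
    have := Tset_zero hs
    simp only [Set.mem_singleton_iff] at this
    simp [hk, this]

private def gfun : List ℕ → List ℕ
  | [] => []
  | k :: L' => (k + 1) :: L'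

private lemma Tset_step (n : ℕ) : Tset (n + 2) ⊆
    (fun L => 0 :: L) '' Tset (n + 1) ∪
    gfun '' Tset n := by
  intro L hL
  cases L with
  | nil => simp [Tset] at hL
  | cons k L' =>
    replace hL : ((k :: L').map (fun k => 2 * k + 1)).sum = n + 2 := hL
    rw [List.map_cons, List.sum_cons] at hL
    cases k with
    | zero =>
      left
      refine ⟨L', ?_, rfl⟩
      show (L'.map (fun k => 2 * k + 1)).sum = n + 1
      omega
    | succ k' =>
      right
      refine ⟨k' :: L', ?_, rfl⟩
      show ((k' :: L').map (fun k => 2 * k + 1)).sum = n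
      rw [List.map_cons, List.sum_cons]
      omega

private lemma Tset_bound : ∀ n, (Tset n).Finite ∧ (Tset n).ncard ≤ Nat.fib (n + 1) := by
  intro n
  induction n using Nat.strong_induction_on with
  | _ n ih =>
    match n with
    | 0 =>
      have hfin : (Tset 0).Finite := (Set.finite_singleton []).subset Tset_zero
      exact ⟨hfin, le_trans (Set.ncard_le_ncard Tset_zero (Set.finite_singleton [])) (by simp)⟩
    | 1 =>
      have hfin : (Tset 1).Finite := (Set.finite_singleton [0]).subset Tset_one
      exact ⟨hfin, le_trans (Set.ncard_le_ncard Tset_one (Set.finite_singleton [0])) (by simp)⟩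
    | (n + 2) =>
      obtain ⟨hf1, hc1⟩ := ih (n + 1) (by omega)
      obtain ⟨hf0, hc0⟩ := ih n (by omega)
      have hsub := Tset_step n
      have hfU : ((fun L => 0 :: L) '' Tset (n + 1) ∪
          gfun '' Tset n).Finite :=
        (hf1.image _).union (hf0.image _)
      refine ⟨hfU.subset hsub, ?_⟩
      calc (Tset (n + 2)).ncard ≤ _ := Set.ncard_le_ncard hsub hfU
        _ ≤ ((fun L => 0 :: L) '' Tset (n + 1)).ncard +
            (gfun '' Tset n).ncard :=
          Set.ncard_union_le _ _
        _ ≤ (Tset (n + 1)).ncard + (Tset n).ncard :=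
          add_le_add (Set.ncard_image_le hf1) (Set.ncard_image_le hf0)
        _ ≤ Nat.fib (n + 2) + Nat.fib (n + 1) := by gcongr
        _ = Nat.fib (n + 3) := by
          rw [Nat.add_comm]
          exact (Nat.fib_add_two (n := n + 1)).symm

private lemma fib_le_phi_pow : ∀ n : ℕ, (Nat.fib (n + 1) : ℝ) ≤ ((1 + Real.sqrt 5) / 2) ^ n := by
  have h5 : (0:ℝ) ≤ Real.sqrt 5 := Real.sqrt_nonneg 5
  have h1 : (1:ℝ) ≤ (1 + Real.sqrt 5) / 2 := by
    nlinarith [Real.sq_sqrt (by norm_num : (5:ℝ) ≥ 0), Real.sqrt_nonneg 5]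
  have hsq : ((1 + Real.sqrt 5) / 2) ^ 2 = (1 + Real.sqrt 5) / 2 + 1 := by
    have : Real.sqrt 5 ^ 2 = 5 := Real.sq_sqrt (by norm_num)
    ring_nf
    nlinarith [this]
  intro n
  induction n using Nat.strong_induction_on with
  | _ n ih =>
    match n with
    | 0 => simp
    | 1 => simpa using h1
    | (n + 2) =>
      have i1 := ih (n + 1) (by omega)
      have i0 := ih n (by omega)
      have : (Nat.fib (n + 3) : ℝ) = Nat.fib (n + 2) + Nat.fib (n + 1) := by
        rw [show n + 3 = (n + 1) + 2 from rfl, Nat.fib_add_two]; push_cast; ring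
      rw [this]
      have hpos : (0:ℝ) ≤ ((1 + Real.sqrt 5) / 2) ^ n := by positivity
      calc (Nat.fib (n + 2) : ℝ) + Nat.fib (n + 1)
          ≤ ((1 + Real.sqrt 5) / 2) ^ (n + 1) + ((1 + Real.sqrt 5) / 2) ^ n := by gcongr
        _ = ((1 + Real.sqrt 5) / 2) ^ n * (((1 + Real.sqrt 5) / 2) + 1) := by ring
        _ = ((1 + Real.sqrt 5) / 2) ^ (n + 2) := by rw [← hsq]; ring

/-- for every `n`, the set of odd-prefix concatenations of length `n` is
finite, of cardinality at most `fib (n+1)`, and in particular at most `((1+√5)/2)^n`. -/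
theorem oddPrefixConcat_card_le {A : Type*} (d : ℕ → A) (n : ℕ) :
    {w : List A | OddPrefixConcat d w ∧ w.length = n}.Finite ∧
    {w : List A | OddPrefixConcat d w ∧ w.length = n}.ncard ≤ Nat.fib (n + 1) ∧
    ({w : List A | OddPrefixConcat d w ∧ w.length = n}.ncard : ℝ) ≤
      ((1 + Real.sqrt 5) / 2) ^ n := by
  obtain ⟨hf, hc⟩ := Tset_bound n
  set f : List ℕ → List A :=
    fun L => (L.map (fun k => List.ofFn (fun i : Fin (2 * k + 1) => d i))).flatten with hfdef
  have hsub : {w : List A | OddPrefixConcat d w ∧ w.length = n} ⊆ f '' Tset n := by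
    rintro w ⟨⟨L, hL⟩, hlen⟩
    refine ⟨L, ?_, hL.symm⟩
    have : w.length = (L.map (fun k => 2 * k + 1)).sum := by
      rw [hL, List.length_flatten, List.map_map]
      congr 1
      simp [Function.comp]
    show (L.map (fun k => 2 * k + 1)).sum = n
    rw [← this]; exact hlen
  have hfin : {w : List A | OddPrefixConcat d w ∧ w.length = n}.Finite :=
    (hf.image f).subset hsub
  have hcard : {w : List A | OddPrefixConcat d w ∧ w.length = n}.ncard ≤ Nat.fib (n + 1) :=
    le_trans (le_trans (Set.ncard_le_ncard hsub (hf.image f)) (Set.ncard_image_le hf)) hc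
  refine ⟨hfin, hcard, ?_⟩
  calc ({w : List A | OddPrefixConcat d w ∧ w.length = n}.ncard : ℝ)
      ≤ (Nat.fib (n + 1) : ℝ) := by exact_mod_cast hcard
    _ ≤ _ := fib_le_phi_pow n
end

section
/- Let n ∈ ℕ, let x ≤ −γ_0 and β ∈ (−γ_n, −γ_{n+1}] be real numbers with d(l_β, β) = φ^{n+1}(d(l_x, x)). Then for every t ∈ [l_x, r_x), the sequence φ^{n+1}(d(t, x)) satisfies φ^{n+1}(d(t, x)) ≼ u_n · d(l_β, β) in the alternating order, where u_n · d(l_β, β) denotes the infinite sequence obtained by prepending the finite word u_n to the sequence d(l_β, β); i.e., u_n d(l_β, β) is an upper bound (in the alternating order) for the φ^{n+1}-images of all x-expansions. -/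
/-- The substitution `φ` acting letterwise on finite words over `ℕ`. -/
def phiList (w : List ℕ) : List ℕ := (w.map phiWord).flatten

/-- The word `u_n = φ^n(1)`. -/
def uWord (n : ℕ) : List ℕ := phiList^[n] [1]

/-- `L_n = |u_n|`. -/
def Lw (n : ℕ) : ℕ := (uWord n).length

/-- `L_{n-1}`, with the convention `L_{-1} = |u_{-1}| = |0| = 1`. -/
def Lprev (n : ℕ) : ℕ := match n with
  | 0 => 1
  | m + 1 => Lw m

/-- `γ` is the number `γ_n`: the unique real `γ > 1` with `γ^{-L_n} + γ^{-2L_{n-1}} = 1`. -/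
def IsGamma (n : ℕ) (γ : ℝ) : Prop :=
  1 < γ ∧ γ ^ (-(Lw n : ℤ)) + γ ^ (-(2 * Lprev n : ℤ)) = 1

/-- The left endpoint `l_β = β/(1-β)`. -/
noncomputable def lpt (β : ℝ) : ℝ := β / (1 - β)

/-- The negative β-transformation `T_β(t) = βt - ⌊βt - l_β⌋`. -/
noncomputable def Tneg (β : ℝ) (t : ℝ) : ℝ := β * t - ⌊β * t - lpt β⌋

/-- The β-expansion `d(t, β)` (indexed from 0: entry `i` is the digit `x_{i+1}`). -/
noncomputable def dExp (β : ℝ) (t : ℝ) : ℕ → ℕ :=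
  fun i => (⌊β * (Tneg β)^[i] t - lpt β⌋).toNat


/-- The right endpoint `r_β = 1/(1-β)`. -/
noncomputable def rpt (β : ℝ) : ℝ := 1 / (1 - β)

/-- The reflexive alternating order: `x ≼ y`. -/
def AltLe (x y : ℕ → ℕ) : Prop := AltLt x y ∨ x = y

/-- The infinite sequence obtained by prepending the finite word `w` to the sequence `x`. -/
def prependSeq (w : List ℕ) (x : ℕ → ℕ) : ℕ → ℕ :=
  fun n => w.getD n (x (n - w.length))


/-! ### Auxiliary lemmas -/

namespace PhiProof

/-- The flatten of the first `m` substituted words. -/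
def W (x : ℕ → ℕ) (m : ℕ) : List ℕ :=
  (List.ofFn (fun i : Fin m => phiWord (x i))).flatten

lemma phiWord_length (k : ℕ) : (phiWord k).length = 2 * k + 1 := by
  simp [phiWord]

lemma phiWord_getD_zero (k : ℕ) : (phiWord k).getD 0 0 = 1 := rfl

lemma phiWord_getD_succ (k j : ℕ) : (phiWord k).getD (j + 1) 0 = 0 := by
  show (List.replicate (2 * k) 0).getD j 0 = 0
  rcases lt_or_ge j (2 * k) with h | h
  · rw [List.getD_eq_getElem _ _ (by simpa using h)]
    simp
  · exact List.getD_eq_default _ _ (by simpa using h)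

lemma W_succ (x : ℕ → ℕ) (m : ℕ) : W x (m + 1) = W x m ++ phiWord (x m) := by
  unfold W
  rw [List.ofFn_succ']
  simp [List.concat_eq_append, List.flatten_concat]

lemma W_length_ge (x : ℕ → ℕ) (m : ℕ) : m ≤ (W x m).length := by
  induction m with
  | zero => simp
  | succ m ih =>
    rw [W_succ, List.length_append, phiWord_length]
    omega

lemma W_length_parity (x : ℕ → ℕ) (m : ℕ) : (W x m).length % 2 = m % 2 := by
  induction m with
  | zero => simp [W]
  | succ m ih =>
    rw [W_succ, List.length_append, phiWord_length]
    omega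

lemma W_prefix (x : ℕ → ℕ) {m m' : ℕ} (h : m ≤ m') : W x m <+: W x m' := by
  induction m' with
  | zero => simp_all
  | succ m' ih =>
    rcases Nat.lt_or_ge m (m' + 1) with h' | h'
    · exact (ih (by omega)).trans (by rw [W_succ]; exact List.prefix_append _ _)
    · have : m = m' + 1 := by omega
      subst this; exact List.prefix_refl _

lemma prefix_getD {l₁ l₂ : List ℕ} (h : l₁ <+: l₂) {n : ℕ} (hn : n < l₁.length) :
    l₂.getD n 0 = l₁.getD n 0 := by
  obtain ⟨t, rfl⟩ := h
  rw [List.getD_eq_getElem _ _ hn,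
    List.getD_eq_getElem _ _ (by rw [List.length_append]; omega),
    List.getElem_append_left hn]

lemma phiSeq_eq (x : ℕ → ℕ) (n : ℕ) : phiSeq x n = (W x (n + 1)).getD n 0 := rfl

lemma phiSeq_eq_W (x : ℕ → ℕ) (n M : ℕ) (h : n < (W x M).length) :
    phiSeq x n = (W x M).getD n 0 := by
  rw [phiSeq_eq]
  rcases le_total (n + 1) M with hM | hM
  · exact (prefix_getD (W_prefix x hM) (by have := W_length_ge x (n + 1); omega)).symm
  · exact (prefix_getD (W_prefix x hM) h)

lemma W_congr {a b : ℕ → ℕ} {m : ℕ} (h : ∀ i < m, a i = b i) : W a m = W b m := by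
  unfold W
  congr 1
  exact congrArg List.ofFn (funext fun i => congrArg phiWord (h i i.isLt))

lemma getD_append_right {l₁ l₂ : List ℕ} {n : ℕ} (h : l₁.length ≤ n) :
    (l₁ ++ l₂).getD n 0 = l₂.getD (n - l₁.length) 0 := by
  rw [List.getD_eq_getElem?_getD, List.getD_eq_getElem?_getD, List.getElem?_append_right h]

lemma getD_append_left {l₁ l₂ : List ℕ} {n : ℕ} (h : n < l₁.length) :
    (l₁ ++ l₂).getD n 0 = l₁.getD n 0 :=
  prefix_getD (List.prefix_append _ _) h

/-- If `a` and `b` agree before `k` and `a k < b k`, the `φ`-images first differ at a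
position `q` of parity opposite to `k`, where the image of `a` has letter `1` and the
image of `b` has letter `0`. -/
lemma phi_diff {a b : ℕ → ℕ} {k : ℕ} (hpre : ∀ i < k, a i = b i) (hlt : a k < b k) :
    ∃ q : ℕ, q % 2 = (k + 1) % 2 ∧ (∀ i < q, phiSeq a i = phiSeq b i) ∧
      phiSeq a q = 1 ∧ phiSeq b q = 0 := by
  have hW : W a k = W b k := W_congr hpre
  have hla : (W a (k + 1)).length = (W a k).length + 2 * a k + 1 := by
    rw [W_succ, List.length_append, phiWord_length]; omega
  have hlb0 : (W b k).length = (W a k).length := by rw [hW]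
  have hlb : (W b (k + 1)).length = (W a k).length + 2 * b k + 1 := by
    rw [W_succ, List.length_append, phiWord_length, hlb0]; omega
  have hla2 : (W a (k + 2)).length = (W a (k + 1)).length + 2 * a (k + 1) + 1 := by
    rw [show k + 2 = (k + 1) + 1 from rfl, W_succ, List.length_append, phiWord_length]; omega
  refine ⟨(W a k).length + 2 * a k + 1, ?_, ?_, ?_, ?_⟩
  · have := W_length_parity a k; omega
  · intro i hi
    rw [phiSeq_eq_W a i (k + 1) (by omega), phiSeq_eq_W b i (k + 1) (by omega),
      W_succ, W_succ, ← hW]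
    rcases lt_or_ge i (W a k).length with h | h
    · rw [getD_append_left h, getD_append_left h]
    · rw [getD_append_right h, getD_append_right h]
      cases hc : i - (W a k).length with
      | zero => rfl
      | succ j => rw [phiWord_getD_succ, phiWord_getD_succ]
  · rw [phiSeq_eq_W a _ (k + 2) (by omega), show k + 2 = (k + 1) + 1 from rfl, W_succ,
      getD_append_right (by omega), hla,
      show (W a k).length + 2 * a k + 1 - ((W a k).length + 2 * a k + 1) = 0 from by omega]
    rfl
  · rw [phiSeq_eq_W b _ (k + 1) (by omega), W_succ, getD_append_right (by omega), hlb0,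
      show (W a k).length + 2 * a k + 1 - (W a k).length = 2 * a k + 1 from by omega,
      phiWord_getD_succ]

lemma phiSeq_mono {a b : ℕ → ℕ} (h : AltLt a b) : AltLt (phiSeq a) (phiSeq b) := by
  obtain ⟨k, hpre, hsign⟩ := h
  have hne : a k ≠ b k := by
    intro he
    rw [he] at hsign
    simp at hsign
  rcases lt_or_gt_of_ne hne with hlt | hgt
  · -- a k < b k : k is odd
    have hkodd : k % 2 = 1 := by
      by_contra hk
      have hk' : Odd (k + 1) := by
        rw [Nat.odd_iff]; omega
      rw [hk'.neg_one_pow] at hsign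
      have : (a k : ℤ) < b k := by exact_mod_cast hlt
      nlinarith
    obtain ⟨q, hq, hpre', ha1, hb0⟩ := phi_diff hpre hlt
    refine ⟨q, hpre', ?_⟩
    have hq1 : Odd (q + 1) := by rw [Nat.odd_iff]; omega
    rw [ha1, hb0, hq1.neg_one_pow]
    norm_num
  · -- b k < a k : k is even
    have hkev : k % 2 = 0 := by
      by_contra hk
      have hk' : Even (k + 1) := by
        rw [Nat.even_iff]; omega
      rw [hk'.neg_one_pow] at hsign
      have : (b k : ℤ) < a k := by exact_mod_cast hgt
      nlinarith
    obtain ⟨q, hq, hpre', hb1, ha0⟩ := phi_diff (fun i hi => (hpre i hi).symm) hgt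
    refine ⟨q, fun i hi => (hpre' i hi).symm, ?_⟩
    have hq1 : Even (q + 1) := by rw [Nat.even_iff]; omega
    rw [ha0, hb1, hq1.neg_one_pow]
    norm_num

lemma altLe_phiSeq {a b : ℕ → ℕ} (h : AltLe a b) : AltLe (phiSeq a) (phiSeq b) := by
  rcases h with h | h
  · exact Or.inl (phiSeq_mono h)
  · exact Or.inr (congrArg phiSeq h)

lemma altLe_phiSeq_iter (m : ℕ) {a b : ℕ → ℕ} (h : AltLe a b) :
    AltLe (phiSeq^[m] a) (phiSeq^[m] b) := by
  induction m with
  | zero => simpa using h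
  | succ m ih =>
    rw [Function.iterate_succ_apply', Function.iterate_succ_apply']
    exact altLe_phiSeq ih

lemma prependSeq_lt {w : List ℕ} {s : ℕ → ℕ} {n : ℕ} (h : n < w.length) :
    prependSeq w s n = w.getD n 0 := by
  unfold prependSeq
  rw [List.getD_eq_getElem _ _ h, List.getD_eq_getElem _ _ h]

lemma prependSeq_ge {w : List ℕ} {s : ℕ → ℕ} {n : ℕ} (h : w.length ≤ n) :
    prependSeq w s n = s (n - w.length) := by
  unfold prependSeq
  rw [List.getD_eq_default _ _ h]

lemma W_prepend (w : List ℕ) (s : ℕ → ℕ) (M : ℕ) :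
    W (prependSeq w s) (w.length + M) = phiList w ++ W s M := by
  induction M with
  | zero =>
    show W (prependSeq w s) w.length = phiList w ++ W s 0
    have h0 : W s 0 = [] := by simp [W]
    rw [h0, List.append_nil]
    unfold W phiList
    congr 1
    have h1 : (fun i : Fin w.length => phiWord (prependSeq w s i)) =
        (fun i : Fin w.length => phiWord (w[(i : ℕ)])) := by
      funext i
      rw [prependSeq_lt i.isLt]
      congr 1
      exact List.getD_eq_getElem _ _ i.isLt
    rw [h1]
    conv_rhs => rw [← (List.ofFn_getElem : List.ofFn (fun i : Fin w.length => w[(i : ℕ)]) = w), List.map_ofFn]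
    rfl
  | succ M ih =>
    rw [show w.length + (M + 1) = (w.length + M) + 1 from by omega, W_succ, ih,
      prependSeq_ge (by omega), show w.length + M - w.length = M from by omega,
      W_succ, List.append_assoc]

lemma phiSeq_prepend (w : List ℕ) (s : ℕ → ℕ) :
    phiSeq (prependSeq w s) = prependSeq (phiList w) (phiSeq s) := by
  funext n
  have h1 : n < (W (prependSeq w s) (w.length + (n + 1))).length := by
    have := W_length_ge (prependSeq w s) (w.length + (n + 1)); omega
  rw [phiSeq_eq_W _ n _ h1, W_prepend]
  rcases lt_or_ge n (phiList w).length with h | h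
  · rw [getD_append_left h, prependSeq_lt h]
  · rw [getD_append_right h, prependSeq_ge h]
    have h2 : n - (phiList w).length < (W s (n + 1)).length := by
      have := W_length_ge s (n + 1); omega
    rw [phiSeq_eq_W s _ (n + 1) h2]

lemma phiSeq_iter_prepend (m : ℕ) (w : List ℕ) (s : ℕ → ℕ) :
    phiSeq^[m] (prependSeq w s) = prependSeq (phiList^[m] w) (phiSeq^[m] s) := by
  induction m generalizing w s with
  | zero => rfl
  | succ m ih =>
    rw [Function.iterate_succ_apply, Function.iterate_succ_apply,
      Function.iterate_succ_apply, phiSeq_prepend, ih]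

/-! ### Beta-expansion lemmas -/

lemma rpt_eq {b : ℝ} (hb : b < -1) : rpt b = lpt b + 1 := by
  have h : (1 : ℝ) - b ≠ 0 := by linarith
  unfold rpt lpt
  field_simp
  ring

lemma beta_rpt {b : ℝ} (hb : b < -1) : b * rpt b = lpt b := by
  have h : (1 : ℝ) - b ≠ 0 := by linarith
  unfold rpt lpt
  field_simp

lemma Tneg_mem {b t : ℝ} (hb : b < -1) (ht : t ∈ Set.Ico (lpt b) (rpt b)) :
    Tneg b t ∈ Set.Ico (lpt b) (rpt b) := by
  have hfr := Int.self_sub_floor (b * t - lpt b)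
  have he : Tneg b t = lpt b + Int.fract (b * t - lpt b) := by
    unfold Tneg
    linarith [hfr]
  constructor
  · rw [he]; have := Int.fract_nonneg (b * t - lpt b); linarith
  · rw [he, rpt_eq hb]; have := Int.fract_lt_one (b * t - lpt b); linarith

lemma Tneg_iter_mem {b t : ℝ} (hb : b < -1) (ht : t ∈ Set.Ico (lpt b) (rpt b)) (i : ℕ) :
    (Tneg b)^[i] t ∈ Set.Ico (lpt b) (rpt b) := by
  induction i with
  | zero => exact ht
  | succ i ih => rw [Function.iterate_succ_apply']; exact Tneg_mem hb ih

lemma digit_pos {b t : ℝ} (hb : b < -1) (ht : t ∈ Set.Ico (lpt b) (rpt b)) :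
    0 < b * t - lpt b := by
  have h1 : b * rpt b < b * t := by
    apply mul_lt_mul_of_neg_left ht.2
    linarith
  rw [beta_rpt hb] at h1
  linarith

lemma digit_floor_nonneg {b t : ℝ} (hb : b < -1) (ht : t ∈ Set.Ico (lpt b) (rpt b)) :
    0 ≤ ⌊b * t - lpt b⌋ :=
  Int.floor_nonneg.mpr (le_of_lt (digit_pos hb ht))

lemma dExp_cast {b t : ℝ} (hb : b < -1) (ht : t ∈ Set.Ico (lpt b) (rpt b)) (i : ℕ) :
    ((dExp b t i : ℤ)) = ⌊b * (Tneg b)^[i] t - lpt b⌋ :=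
  Int.toNat_of_nonneg (digit_floor_nonneg hb (Tneg_iter_mem hb ht i))

lemma iter_sub {b t s : ℝ} (hb : b < -1) (ht : t ∈ Set.Ico (lpt b) (rpt b))
    (hs : s ∈ Set.Ico (lpt b) (rpt b)) (k : ℕ)
    (hde : ∀ i < k, dExp b t i = dExp b s i) :
    (Tneg b)^[k] t - (Tneg b)^[k] s = b ^ k * (t - s) := by
  induction k with
  | zero => simp
  | succ k ih =>
    have hdig : ⌊b * (Tneg b)^[k] t - lpt b⌋ = ⌊b * (Tneg b)^[k] s - lpt b⌋ := by
      rw [← dExp_cast hb ht k, ← dExp_cast hb hs k, hde k (by omega)]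
    have ih' := ih (fun i hi => hde i (by omega))
    rw [Function.iterate_succ_apply', Function.iterate_succ_apply']
    have hT : ∀ u : ℝ, Tneg b u = b * u - ⌊b * u - lpt b⌋ := fun u => rfl
    rw [hT, hT, hdig]
    have hkey : b * ((Tneg b)^[k] t - (Tneg b)^[k] s) = b ^ (k + 1) * (t - s) := by
      rw [ih', pow_succ]; ring
    linear_combination hkey

/-- `d(l_b, b)` is minimal for the alternating order. -/
lemma dExp_lpt_min {b s : ℝ} (hb : b < -1) (hs : s ∈ Set.Ico (lpt b) (rpt b)) :
    AltLe (dExp b (lpt b)) (dExp b s) := by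
  have hl : lpt b ∈ Set.Ico (lpt b) (rpt b) :=
    ⟨le_refl _, by rw [rpt_eq hb]; linarith⟩
  by_cases hls : lpt b = s
  · right; rw [hls]
  by_cases heq : ∀ i, dExp b (lpt b) i = dExp b s i
  · right; funext i; exact heq i
  push_neg at heq
  left
  have hex : ∃ k, dExp b (lpt b) k ≠ dExp b s k := heq
  classical
  set k := Nat.find hex with hk
  have hkne : dExp b (lpt b) k ≠ dExp b s k := Nat.find_spec hex
  have hkpre : ∀ i < k, dExp b (lpt b) i = dExp b s i := by
    intro i hi
    by_contra hcon
    have hle : Nat.find hex ≤ i := Nat.find_le hcon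
    omega
  refine ⟨k, hkpre, ?_⟩
  have hsub := iter_sub hb hl hs k hkpre
  set u := (Tneg b)^[k] (lpt b) with hu
  set v := (Tneg b)^[k] s with hv
  have hDu : ((dExp b (lpt b) k : ℤ)) = ⌊b * u - lpt b⌋ := dExp_cast hb hl k
  have hDv : ((dExp b s k : ℤ)) = ⌊b * v - lpt b⌋ := dExp_cast hb hs k
  have hls' : lpt b < s := lt_of_le_of_ne hs.1 hls
  have hfu1 : (⌊b * u - lpt b⌋ : ℝ) ≤ b * u - lpt b := Int.floor_le _
  have hfu2 : b * u - lpt b < ⌊b * u - lpt b⌋ + 1 := Int.lt_floor_add_one _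
  have hfv1 : (⌊b * v - lpt b⌋ : ℝ) ≤ b * v - lpt b := Int.floor_le _
  have hfv2 : b * v - lpt b < ⌊b * v - lpt b⌋ + 1 := Int.lt_floor_add_one _
  have hne' : ⌊b * u - lpt b⌋ ≠ ⌊b * v - lpt b⌋ := by
    intro h
    apply hkne
    have hcast : (dExp b (lpt b) k : ℤ) = (dExp b s k : ℤ) := by rw [hDu, hDv, h]
    exact_mod_cast hcast
  rcases lt_or_gt_of_ne hne' with hUV | hUV
  · -- ⌊u⌋ < ⌊v⌋ : then b^{k+1} > 0 so k+1 even
    have h1 : b * u < b * v := by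
      have hc : (⌊b * u - lpt b⌋ : ℝ) + 1 ≤ (⌊b * v - lpt b⌋ : ℝ) := by exact_mod_cast hUV
      linarith
    have h2 : b ^ (k + 1) * (lpt b - s) < 0 := by
      have hm : b * (u - v) < 0 := by nlinarith
      calc b ^ (k + 1) * (lpt b - s) = b * (b ^ k * (lpt b - s)) := by ring
        _ = b * (u - v) := by rw [← hsub]
        _ < 0 := hm
    have h3 : (0 : ℝ) < b ^ (k + 1) := by nlinarith
    rcases Nat.even_or_odd (k + 1) with hev | hodd
    · rw [hev.neg_one_pow, one_mul]
      have hc : (dExp b (lpt b) k : ℤ) < dExp b s k := by rw [hDu, hDv]; exact hUV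
      linarith
    · exact absurd (hodd.pow_neg (show b < 0 by linarith)) (by linarith)
  · -- ⌊u⌋ > ⌊v⌋ : then b^{k+1} < 0 so k+1 odd
    have h1 : b * v < b * u := by
      have hc : (⌊b * v - lpt b⌋ : ℝ) + 1 ≤ (⌊b * u - lpt b⌋ : ℝ) := by exact_mod_cast hUV
      linarith
    have h2 : (0 : ℝ) < b ^ (k + 1) * (lpt b - s) := by
      have hm : 0 < b * (u - v) := by nlinarith
      calc (0:ℝ) < b * (u - v) := hm
        _ = b * (b ^ k * (lpt b - s)) := by rw [← hsub]
        _ = b ^ (k + 1) * (lpt b - s) := by ring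
    have h3 : b ^ (k + 1) < 0 := by nlinarith
    rcases Nat.even_or_odd (k + 1) with hev | hodd
    · exact absurd (hev.pow_pos (show b ≠ 0 by intro h; rw [h] at hb; linarith)) (by linarith)
    · rw [hodd.neg_one_pow]
      have hc : (dExp b s k : ℤ) < dExp b (lpt b) k := by rw [hDu, hDv]; exact hUV
      nlinarith

/-- The key "supremum" bound: `d(t, b) ≼ 0 · d(l_b, b)`. -/
lemma dExp_sup {b t : ℝ} (hb : b < -1) (ht : t ∈ Set.Ico (lpt b) (rpt b)) :
    AltLe (dExp b t) (prependSeq [0] (dExp b (lpt b))) := by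
  have hp0 : prependSeq [0] (dExp b (lpt b)) 0 = 0 := rfl
  have hps : ∀ n, prependSeq [0] (dExp b (lpt b)) (n + 1) = dExp b (lpt b) n := fun n => rfl
  rcases Nat.eq_zero_or_pos (dExp b t 0) with h0 | h0
  · -- first digit is 0 : tail comparison
    have hT : (Tneg b) t ∈ Set.Ico (lpt b) (rpt b) := Tneg_mem hb ht
    have htail : ∀ i, dExp b t (i + 1) = dExp b (Tneg b t) i := by
      intro i
      unfold dExp
      rw [Function.iterate_succ_apply]
    rcases dExp_lpt_min hb hT with hlt | heq
    · obtain ⟨k, hpre, hsign⟩ := hlt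
      left
      refine ⟨k + 1, ?_, ?_⟩
      · intro i hi
        cases i with
        | zero => rw [h0, hp0]
        | succ j => rw [htail j, hps j, hpre j (by omega)]
      · rw [htail k, hps k]
        have hpw : ((-1 : ℤ)) ^ (k + 1 + 1) = (-1) ^ (k + 1) * (-1) := pow_succ _ _
        rw [hpw]
        nlinarith [hsign]
    · right
      funext i
      cases i with
      | zero => rw [h0, hp0]
      | succ j => rw [htail j, hps j, ← heq]
  · -- first digit positive : immediately smaller
    left
    refine ⟨0, by omega, ?_⟩
    rw [hp0]
    have hc : (0 : ℤ) < (dExp b t 0 : ℤ) := by exact_mod_cast h0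
    have h1 : ((-1 : ℤ)) ^ (0 + 1) = -1 := by norm_num
    rw [h1]
    push_cast
    linarith

lemma phiList_zero : phiList [0] = [1] := rfl

lemma uWord_eq (n : ℕ) : phiList^[n + 1] ([0] : List ℕ) = uWord n := by
  rw [Function.iterate_succ_apply, phiList_zero]
  rfl

end PhiProof

/-- if `x ≤ -γ_0`, `β ∈ (-γ_n, -γ_{n+1}]` and `d(l_β, β) = φ^{n+1}(d(l_x, x))`,
then for every `t ∈ [l_x, r_x)` one has `φ^{n+1}(d(t, x)) ≼ u_n · d(l_β, β)` in the
alternating order. -/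
theorem phi_expansion_le_sup (n : ℕ) (γ0 γn γn1 : ℝ)
    (hγ0 : IsGamma 0 γ0) (hγn : IsGamma n γn) (hγn1 : IsGamma (n + 1) γn1)
    (x β : ℝ) (hx : x ≤ -γ0) (hβ : β ∈ Set.Ioc (-γn) (-γn1))
    (hd : dExp β (lpt β) = phiSeq^[n + 1] (dExp x (lpt x))) :
    ∀ t : ℝ, lpt x ≤ t → t < rpt x →
      AltLe (phiSeq^[n + 1] (dExp x t)) (prependSeq (uWord n) (dExp β (lpt β))) := by
  intro t ht1 ht2
  have hγ0' : 1 < γ0 := hγ0.1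
  have hx' : x < -1 := by linarith
  have hsup := PhiProof.dExp_sup hx' ⟨ht1, ht2⟩
  have hmono := PhiProof.altLe_phiSeq_iter (n + 1) hsup
  rw [PhiProof.phiSeq_iter_prepend, PhiProof.uWord_eq, ← hd] at hmono
  exact hmono
end

section
/- For every integer n ≥ 1, the lengths L_n = |φ^n(1)| satisfy L_n = 2 L_{n−1} + (−1)^{n+1}; consequently L_n and 2L_{n−1} = |u_{n−1}u_{n−1}| are coprime. -/
lemma phiList_length (w : List ℕ) : (phiList w).length = 2 * w.sum + w.length := by
  induction w with
  | nil => simp [phiList]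
  | cons a t ih =>
    simp only [phiList, List.map_cons, List.flatten_cons, List.length_append,
      List.sum_cons, List.length_cons] at *
    simp [phiWord] at *
    omega

lemma phiList_sum (w : List ℕ) : (phiList w).sum = w.length := by
  induction w with
  | nil => simp [phiList]
  | cons a t ih =>
    simp only [phiList, List.map_cons, List.flatten_cons, List.sum_append,
      List.length_cons] at *
    simp [phiWord] at *
    omega

lemma Lw_succ (n : ℕ) : Lw (n + 1) = 2 * (uWord n).sum + Lw n := by
  simp only [Lw, uWord, Function.iterate_succ_apply']
  exact phiList_length _

lemma sum_uWord_succ (n : ℕ) : (uWord (n + 1)).sum = Lw n := by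
  simp only [uWord, Function.iterate_succ_apply']
  exact phiList_sum _

lemma Lw_rec (n : ℕ) : Lw (n + 2) = Lw (n + 1) + 2 * Lw n := by
  have h := Lw_succ (n + 1)
  rw [sum_uWord_succ, show n + 1 + 1 = n + 2 from rfl] at h
  omega

lemma Lw_int (n : ℕ) : (Lw (n + 1) : ℤ) = 2 * (Lw n : ℤ) + (-1) ^ n := by
  induction n with
  | zero => simp [Lw, uWord, phiList, phiWord]
  | succ m ih =>
    have h := Lw_rec m
    have : (Lw (m + 2) : ℤ) = (Lw (m + 1) : ℤ) + 2 * (Lw m : ℤ) := by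
      exact_mod_cast h
    rw [this, ih]
    ring

/-- for every `n ≥ 1`, `L_n = 2 L_{n-1} + (-1)^{n+1}`; consequently `L_n`
and `2 L_{n-1} = |u_{n-1}u_{n-1}|` are coprime.  (Stated with `n + 1` in place of `n`.) -/
theorem length_uWord_rec (n : ℕ) :
    (Lw (n + 1) : ℤ) = 2 * (Lw n : ℤ) + (-1) ^ (n + 2) ∧
    Nat.Coprime (Lw (n + 1)) (2 * Lw n) := by
  have h := Lw_int n
  constructor
  · rw [h]; ring
  · rcases Nat.even_or_odd n with he | ho
    · have hpow : ((-1 : ℤ)) ^ n = 1 := he.neg_one_pow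
      rw [hpow] at h
      have : Lw (n + 1) = 2 * Lw n + 1 := by exact_mod_cast h
      rw [this]
      simp [Nat.Coprime, Nat.succ_eq_add_one, Nat.gcd_comm, Nat.add_comm]
    · have hpow : ((-1 : ℤ)) ^ n = -1 := ho.neg_one_pow
      rw [hpow] at h
      have : 2 * Lw n = Lw (n + 1) + 1 := by omega
      rw [this]
      simp [Nat.Coprime, Nat.add_comm]
end

section
/- For each n ∈ ℕ, taking β = −γ_n, the β-expansion of l_β is d(l_{−γ_n}, −γ_n) = u_n (u_{n−1} u_{n−1})^∞, the one-sided infinite sequence consisting of the word u_n followed by infinitely many repetitions of the word u_{n−1}u_{n−1}. In particular d(l_{−γ_0}, −γ_0) = 1 0^∞ (the letter 1 followed by infinitely many 0's). -/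
/-- The word `u_{n-1}`, with the convention `u_{-1} = 0` (the one-letter word). -/
def uPrev (n : ℕ) : List ℕ := match n with
  | 0 => [0]
  | m + 1 => uWord m

namespace NB

/-- two-step induction -/
theorem two_step {P : ℕ → Prop} (h0 : P 0) (h1 : P 1)
    (h : ∀ q, P q → P (q+1) → P (q+2)) : ∀ q, P q := by
  intro q
  induction q using Nat.strong_induction_on with
  | _ q ih =>
    match q with
    | 0 => exact h0
    | 1 => exact h1
    | (q+2) => exact h q (ih q (by omega)) (ih (q+1) (by omega))

def U : ℕ → List ℕ
  | 0 => [0]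
  | 1 => [1]
  | (q+2) => U (q+1) ++ (U q ++ U q)

theorem phiList_append (a b : List ℕ) : phiList (a ++ b) = phiList a ++ phiList b := by
  simp [phiList]

theorem phiList_U (q : ℕ) : phiList (U q) = U (q+1) := by
  induction q using two_step with
  | h0 => simp [U, phiList, phiWord]
  | h1 => simp [U, phiList, phiWord]
  | h q ih1 ih2 =>
    show phiList (U (q+1) ++ (U q ++ U q)) = U (q+3)
    rw [phiList_append, phiList_append, ih1, ih2]
    rfl

theorem uWord_eq_U (q : ℕ) : uWord q = U (q+1) := by
  induction q with
  | zero => rfl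
  | succ q ih =>
    show phiList^[q+1] [1] = U (q+2)
    rw [Function.iterate_succ_apply', show phiList^[q] [1] = uWord q from rfl, ih, phiList_U]

def M (q : ℕ) : ℕ := (U q).length

theorem M0 : M 0 = 1 := rfl
theorem M1 : M 1 = 1 := rfl
theorem M_rec (q : ℕ) : M (q+2) = M (q+1) + (M q + M q) := by
  simp [M, U, List.length_append]

theorem M_pos (q : ℕ) : 1 ≤ M q := by
  induction q using two_step with
  | h0 => simp [M0]
  | h1 => simp [M1]
  | h q ih1 ih2 => rw [M_rec]; omega

theorem M_odd (q : ℕ) : Odd (M q) := by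
  induction q using two_step with
  | h0 => simp [M0]
  | h1 => simp [M1]
  | h q ih1 ih2 => rw [M_rec]; rcases ih2 with ⟨k, hk⟩; exact ⟨k + M q, by omega⟩

theorem M_mono (q : ℕ) : M q ≤ M (q+1) := by
  match q with
  | 0 => simp [M0, M1]
  | (q+1) => rw [M_rec]; have := M_pos q; omega

theorem M_par (q : ℕ) : M (q+1) + 1 = 2 * M q ∨ M (q+1) = 2 * M q + 1 := by
  induction q with
  | zero => left; rfl
  | succ q ih => rw [M_rec]; omega

end NB

namespace NB
section Vals
variable (γ : ℝ)

noncomputable def SV (w : List ℕ) (x : ℝ) : ℝ := w.foldr (fun a v => ((a : ℝ) + v) / (-γ)) x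

noncomputable def pw (w : List ℕ) : ℝ := ((-γ)⁻¹) ^ w.length

noncomputable def val (w : List ℕ) : ℝ := SV γ w 0

noncomputable def A (q : ℕ) : ℝ := val γ (U q)

noncomputable def xq (q : ℕ) : ℝ := (γ ^ M q)⁻¹

theorem SV_nil (x : ℝ) : SV γ [] x = x := rfl
theorem SV_cons (a : ℕ) (w : List ℕ) (x : ℝ) :
    SV γ (a :: w) x = ((a : ℝ) + SV γ w x) / (-γ) := rfl
theorem SV_append (w₁ w₂ : List ℕ) (x : ℝ) :
    SV γ (w₁ ++ w₂) x = SV γ w₁ (SV γ w₂ x) := by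
  simp [SV]

theorem pw_cons (a : ℕ) (w : List ℕ) : pw γ (a :: w) = (-γ)⁻¹ * pw γ w := by
  simp [pw, List.length_cons, pow_succ, mul_comm]

theorem SV_affine (w : List ℕ) (x : ℝ) : SV γ w x = val γ w + pw γ w * x := by
  induction w with
  | nil => simp [SV_nil, val, pw]
  | cons a w ih =>
    show ((a : ℝ) + SV γ w x) / (-γ) = val γ (a :: w) + pw γ (a :: w) * x
    rw [ih, pw_cons, show val γ (a :: w) = ((a : ℝ) + val γ w) / (-γ) from rfl]
    ring

theorem pw_U (q : ℕ) : pw γ (U q) = -(xq γ q) := by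
  rw [pw, xq, show (U q).length = M q from rfl, inv_pow, (M_odd q).neg_pow, inv_neg]

theorem A_def (q : ℕ) : A γ q = val γ (U q) := rfl

theorem A_rec (q : ℕ) : A γ (q+2) = A γ (q+1) - xq γ (q+1) * ((1 - xq γ q) * A γ q) := by
  have h : A γ (q+2) = SV γ (U (q+1)) (SV γ (U q) (SV γ (U q) 0)) := by
    rw [A_def, val, show U (q+2) = U (q+1) ++ (U q ++ U q) from rfl, SV_append, SV_append]
  rw [h, SV_affine γ (U (q+1)), SV_affine γ (U q), SV_affine γ (U q)]
  simp only [pw_U, show ∀ w, SV γ w 0 = val γ w from fun _ => rfl, ← A_def]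
  ring

theorem A0 : A γ 0 = 0 := by
  show ((0:ℕ) + (0:ℝ)) / (-γ) = 0
  simp

theorem A1 : A γ 1 = 1 / (-γ) := by
  simp [A_def, val, U, SV]

end Vals

section Gam
variable {γ : ℝ} (hγ : 1 < γ)
include hγ

theorem gpos : (0:ℝ) < γ := lt_trans one_pos hγ

theorem xq_pos (q : ℕ) : 0 < xq γ q := inv_pos.2 (pow_pos (gpos hγ) _)

theorem xq_lt_one (q : ℕ) : xq γ q < 1 := by
  rw [xq, inv_lt_one_iff₀]
  right
  exact one_lt_pow₀ hγ (by have := M_pos q; omega)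

theorem xq_anti (q : ℕ) : xq γ (q+1) ≤ xq γ q := by
  rw [xq, xq]
  apply inv_anti₀ (pow_pos (gpos hγ) _)
  exact pow_le_pow_right₀ (le_of_lt hγ) (M_mono q)

end Gam
end NB

namespace NB
section Main
variable {γ : ℝ} (n : ℕ) (hγ : 1 < γ)

/-- discrepancy sequence -/
noncomputable def dd (γ : ℝ) (q : ℕ) : ℝ := A γ q * (1 + xq γ (q+1)) - A γ (q+1) * (1 + xq γ q)

theorem dd_rec (q : ℕ) : dd γ (q+1) = xq γ (q+1) * ((1 - xq γ q) * dd γ q) := by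
  have hx : xq γ (q+2) = xq γ (q+1) * (xq γ q * xq γ q) := by
    rw [xq, xq, xq, M_rec, pow_add, pow_add, mul_inv, mul_inv]
  have hA := A_rec γ q
  rw [dd, dd, hx, hA]
  ring

include hγ

theorem dd_pos (q : ℕ) : 0 < dd γ q := by
  induction q with
  | zero =>
    have : dd γ 0 = (1 + xq γ 0) / γ := by
      rw [dd, A0, A1]
      field_simp [ne_of_gt (gpos hγ)]
      ring
    rw [this]
    have h0 := xq_pos hγ 0
    positivity
  | succ q ih =>
    rw [dd_rec]
    have h1 := xq_pos hγ (q+1)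
    have h2 := xq_lt_one hγ q
    have : 0 < 1 - xq γ q := by linarith
    positivity

theorem one_xq_pos (q : ℕ) : 0 < 1 + xq γ q := by
  have := xq_pos hγ q; linarith

/-- periodic value -/
theorem vP_step (q : ℕ) : A γ (q+1) / (1 + xq γ (q+1)) ≤ A γ q / (1 + xq γ q) := by
  rw [div_le_div_iff₀ (one_xq_pos hγ (q+1)) (one_xq_pos hγ q)]
  have := dd_pos hγ q
  rw [dd] at this
  linarith

theorem vP_le (q q' : ℕ) (h : q ≤ q') :
    A γ q' / (1 + xq γ q') ≤ A γ q / (1 + xq γ q) := by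
  induction q' with
  | zero => simp_all
  | succ m ih =>
    rcases Nat.lt_or_ge q (m+1) with hlt | hge
    · exact le_trans (vP_step hγ m) (ih (by omega))
    · have : q = m + 1 := by omega
      subst this; rfl

end Main
end NB

namespace NB
section Ineq
variable {γ : ℝ} {n : ℕ} (hγ : 1 < γ)

/-- `z = vP n`, the minimal tail value. -/
noncomputable def zz (γ : ℝ) (n : ℕ) : ℝ := A γ n / (1 + xq γ n)

/-- `R d`: upper bound for level-`d` tails. -/
noncomputable def R (γ : ℝ) (n d : ℕ) : ℝ := A γ d - xq γ d * zz γ n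

include hγ

theorem z_le_vP {q : ℕ} (h : q ≤ n) : zz γ n ≤ A γ q / (1 + xq γ q) := vP_le hγ q n h

theorem z_nonpos : zz γ n ≤ 0 := by
  have h := z_le_vP (n := n) hγ (Nat.zero_le n)
  rw [A0] at h
  simpa using h

theorem J2 {d : ℕ} (h : d ≤ n) : zz γ n * (1 + xq γ d) ≤ A γ d := by
  have h1 := z_le_vP (n := n) hγ h
  have h2 := one_xq_pos hγ (γ := γ) d
  rw [le_div_iff₀ h2] at h1
  linarith

theorem R_n : R γ n n = zz γ n := by
  rw [R, zz]
  have h2 : (1 + xq γ n) ≠ 0 := ne_of_gt (one_xq_pos hγ n)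
  field_simp
  ring

theorem z_le_R {d : ℕ} (h : d ≤ n) : zz γ n ≤ R γ n d := by
  have := J2 (n := n) hγ h
  rw [R]
  nlinarith [this]

theorem J1 {d : ℕ} (h : d + 1 ≤ n) : zz γ n ≤ A γ d - xq γ d * R γ n (d+1) := by
  have h1 := z_le_vP (n := n) hγ h
  have hd := dd_pos hγ (γ := γ) d
  have hx := xq_pos hγ (γ := γ) d
  have hx1 := xq_pos hγ (γ := γ) (d+1)
  have hxl := xq_lt_one hγ (γ := γ) d
  have hxl1 := xq_lt_one hγ (γ := γ) (d+1)
  have hpos : (0:ℝ) < 1 + xq γ (d+1) := one_xq_pos hγ (d+1)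
  rw [le_div_iff₀ hpos] at h1
  rw [R, dd] at *
  have hcoef : 0 < 1 - xq γ d * xq γ (d+1) := by nlinarith
  nlinarith [h1, hd]

theorem J3 {d : ℕ} (h : d + 1 ≤ n) : R γ n (d+1) ≤ R γ n d := by
  have h1 := z_le_vP (n := n) hγ h
  have hd := dd_pos hγ (γ := γ) d
  have hxa := xq_anti hγ (γ := γ) d
  have hpos : (0:ℝ) < 1 + xq γ (d+1) := one_xq_pos hγ (d+1)
  rw [le_div_iff₀ hpos] at h1
  rw [R, R, dd] at *
  nlinarith [h1, hd]

theorem R_anti {d e : ℕ} (hde : d ≤ e) (h : e ≤ n) : R γ n e ≤ R γ n d := by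
  induction e with
  | zero => simp_all
  | succ m ih =>
    rcases Nat.lt_or_ge d (m+1) with hlt | hge
    · exact le_trans (J3 hγ (by omega)) (ih (by omega) (by omega))
    · have : d = m + 1 := by omega
      subst this; rfl

/-- prepend `U d` map sends `[z, R (d+1)]` into `[z, R d]`. -/
theorem Hmap {d : ℕ} (h : d + 1 ≤ n) {x : ℝ} (hx1 : zz γ n ≤ x) (hx2 : x ≤ R γ n (d+1)) :
    zz γ n ≤ A γ d - xq γ d * x ∧ A γ d - xq γ d * x ≤ R γ n d := by
  have hxp := xq_pos hγ (γ := γ) d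
  constructor
  · have := J1 (n := n) hγ h
    nlinarith
  · rw [R]
    nlinarith

/-- prepend `U d` twice sends `[z, R (d+1)]` into `[z, R d]`. -/
theorem H2map {d : ℕ} (h : d + 1 ≤ n) {x : ℝ} (hx1 : zz γ n ≤ x) (hx2 : x ≤ R γ n (d+1)) :
    zz γ n ≤ A γ d - xq γ d * (A γ d - xq γ d * x) ∧
      A γ d - xq γ d * (A γ d - xq γ d * x) ≤ R γ n d := by
  obtain ⟨ha, hb⟩ := Hmap hγ h hx1 hx2
  have hxp := xq_pos hγ (γ := γ) d
  have hxl := xq_lt_one hγ (γ := γ) d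
  have hJ2 := J2 (n := n) hγ (le_trans (Nat.le_succ d) h)
  constructor
  · -- A d - x d * (H x) ≥ A d - x d * R d ≥ z
    have h1 : A γ d - xq γ d * R γ n d ≤ A γ d - xq γ d * (A γ d - xq γ d * x) := by
      nlinarith
    have h2 : zz γ n ≤ A γ d - xq γ d * R γ n d := by
      rw [R]
      nlinarith
    linarith
  · rw [R]
    nlinarith

end Ineq
end NB

namespace NB

theorem SV_U (γ : ℝ) (q : ℕ) (y : ℝ) : SV γ (U q) y = A γ q - xq γ q * y := by
  rw [SV_affine, pw_U, ← A_def]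
  ring

section Suf
variable {γ : ℝ} {n : ℕ} (hγ : 1 < γ)

include hγ

theorem suf : ∀ q, q ≤ n + 1 → ∀ x : ℝ, zz γ n ≤ x → x ≤ R γ n (q - 1) →
    ∀ j, 1 ≤ j → j < M q →
      zz γ n ≤ SV γ (List.drop j (U q)) x ∧ SV γ (List.drop j (U q)) x ≤ R γ n 0 := by
  intro q
  induction q using two_step with
  | h0 => intro _ x _ _ j hj1 hj2; rw [M0] at hj2; omega
  | h1 => intro _ x _ _ j hj1 hj2; rw [M1] at hj2; omega
  | h q ih0 ih1 =>
    intro hq x hx1 hx2 j hj1 hj2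
    have hq1 : q + 1 ≤ n := by omega
    have hqn : q ≤ n := by omega
    have hl1 : (U (q+1)).length = M (q+1) := rfl
    have hl0 : (U q).length = M q := rfl
    rw [M_rec] at hj2
    have hx2' : x ≤ R γ n (q + 1) := hx2
    obtain ⟨hx'a, hx'b⟩ := Hmap hγ hq1 hx1 hx2'
    obtain ⟨hx''a, hx''b⟩ := H2map hγ hq1 hx1 hx2'
    have hUq2 : U (q+2) = U (q+1) ++ (U q ++ U q) := rfl
    set x' := A γ q - xq γ q * x with hx'def
    set x'' := A γ q - xq γ q * x' with hx''def
    rcases Nat.lt_or_ge j (M (q+1)) with hA | hge1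
    · -- inside first block
      have e : List.drop j (U (q+2)) = List.drop j (U (q+1)) ++ (U q ++ U q) := by
        rw [hUq2, List.drop_append, hl1,
          show j - M (q+1) = 0 by omega, List.drop_zero]
      rw [e, SV_append, SV_append, SV_U, SV_U, ← hx'def, ← hx''def]
      exact ih1 (by omega) x'' hx''a hx''b j hj1 hA
    rcases Nat.lt_or_ge (M (q+1)) j with hgt1 | hle1
    · -- past first block
      rcases Nat.lt_or_ge j (M (q+1) + M q) with hB | hge2
      · -- inside second block
        have e : List.drop j (U (q+2)) = List.drop (j - M (q+1)) (U q) ++ U q := by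
          rw [hUq2, List.drop_append, hl1,
            List.drop_eq_nil_of_le (by omega : (U (q+1)).length ≤ j), List.nil_append,
            List.drop_append, hl0,
            show j - M (q+1) - M q = 0 by omega, List.drop_zero]
        rw [e, SV_append, SV_U, ← hx'def]
        have hx'c : x' ≤ R γ n (q - 1) := le_trans hx'b (R_anti hγ (by omega) hqn)
        exact ih0 (by omega) x' hx'a hx'c (j - M (q+1)) (by omega) (by omega)
      rcases Nat.lt_or_ge (M (q+1) + M q) j with hC | hle2
      · -- inside third block
        have e : List.drop j (U (q+2)) = List.drop (j - M (q+1) - M q) (U q) := by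
          rw [hUq2, List.drop_append, hl1,
            List.drop_eq_nil_of_le (by omega : (U (q+1)).length ≤ j), List.nil_append,
            List.drop_append, hl0,
            List.drop_eq_nil_of_le (by omega : (U q).length ≤ j - M (q+1)), List.nil_append]
        rw [e]
        have hxc : x ≤ R γ n (q - 1) := le_trans hx2' (R_anti hγ (by omega) hq1)
        exact ih0 (by omega) x hx1 hxc (j - M (q+1) - M q) (by omega) (by omega)
      · -- boundary: j = M (q+1) + M q
        have hj : j = M (q+1) + M q := by omega
        have e : List.drop j (U (q+2)) = U q := by
          rw [hUq2, List.drop_append, hl1,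
            List.drop_eq_nil_of_le (by omega : (U (q+1)).length ≤ j), List.nil_append,
            List.drop_append, hl0,
            List.drop_eq_nil_of_le (by omega : (U q).length ≤ j - M (q+1)), List.nil_append,
            show j - M (q+1) - M q = 0 by omega, List.drop_zero]
        rw [e, SV_U, ← hx'def]
        exact ⟨hx'a, le_trans hx'b (R_anti hγ (Nat.zero_le q) hqn)⟩
    · -- boundary: j = M (q+1)
      have hj : j = M (q+1) := by omega
      have e : List.drop j (U (q+2)) = U q ++ U q := by
        rw [hUq2, List.drop_append, hl1,
          List.drop_eq_nil_of_le (by omega : (U (q+1)).length ≤ j), List.nil_append,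
          show j - M (q+1) = 0 by omega, List.drop_zero]
      rw [e, SV_append, SV_U, SV_U, ← hx'def, ← hx''def]
      exact ⟨hx''a, le_trans hx''b (R_anti hγ (Nat.zero_le q) hqn)⟩

end Suf
end NB

namespace NB
section Ident
variable {γ : ℝ} (hγ : 1 < γ)

/-- `Φ_q = A_{q+1} - (1 - x_q) A_q`. -/
noncomputable def Phi (γ : ℝ) (q : ℕ) : ℝ := A γ (q+1) - (1 - xq γ q) * A γ q

theorem Phi_rec (γ : ℝ) (q : ℕ) : Phi γ (q+1) = xq γ (q+1) * Phi γ q := by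
  rw [Phi, Phi, A_rec]
  ring

/-- `Π_q = x_1 x_2 ⋯ x_q`. -/
noncomputable def Pi (γ : ℝ) : ℕ → ℝ
  | 0 => 1
  | (q+1) => Pi γ q * xq γ (q+1)

theorem Phi_eq_Pi (γ : ℝ) (q : ℕ) : Phi γ q = -γ⁻¹ * Pi γ q := by
  induction q with
  | zero =>
    rw [Phi, A0, A1, Pi]
    ring
  | succ q ih =>
    rw [Phi_rec, ih, Pi]
    ring

include hγ

theorem Pi_pos (q : ℕ) : 0 < Pi γ q := by
  induction q with
  | zero => norm_num [Pi]
  | succ q ih =>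
    rw [Pi]
    exact mul_pos ih (xq_pos hγ _)

theorem Pi_sq (q : ℕ) : Pi γ q ^ 2 * γ ^ (M (q+1) + 2 * M q) = γ ^ 3 := by
  induction q with
  | zero => norm_num [Pi, M0, M1]
  | succ q ih =>
    have hx : xq γ (q+1) ^ 2 * γ ^ (2 * M (q+1)) = 1 := by
      rw [xq, inv_pow, ← pow_mul, mul_comm (M (q+1)) 2,
        inv_mul_cancel₀ (by positivity : (γ : ℝ) ^ (2 * M (q+1)) ≠ 0)]
    calc Pi γ (q+1) ^ 2 * γ ^ (M (q+2) + 2 * M (q+1))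
        = (Pi γ q ^ 2 * γ ^ (M (q+1) + 2 * M q)) * (xq γ (q+1) ^ 2 * γ ^ (2 * M (q+1))) := by
          rw [Pi, M_rec]
          rw [show M (q+1) + (M q + M q) + 2 * M (q+1) = (M (q+1) + 2 * M q) + 2 * M (q+1) by ring]
          rw [pow_add]
          ring
      _ = γ ^ 3 := by rw [ih, hx, mul_one]

/-- from the defining equation, `x_{n+1} x_n² (1+γ)² = γ`. -/
theorem eq_prod {n : ℕ} (heq : xq γ (n+1) + xq γ n ^ 2 = 1) :
    xq γ (n+1) * xq γ n ^ 2 * (1 + γ) ^ 2 = γ := by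
  have hgp := gpos hγ
  have hne : γ ≠ 0 := ne_of_gt hgp
  have hxn : xq γ n ^ 2 = (γ ^ (2 * M n))⁻¹ := by
    rw [xq, ← inv_pow, ← pow_mul, inv_pow, mul_comm]
  rcases M_par n with hp | hp
  · -- M (n+1) + 1 = 2 * M n
    have h2 : γ ^ (2 * M n) = γ ^ (M (n+1)) * γ := by
      rw [← pow_succ, ← hp]
    have hx2 : xq γ n ^ 2 = xq γ (n+1) * γ⁻¹ := by
      rw [hxn, h2, mul_inv, xq]
    rw [hx2] at heq ⊢
    -- heq : x + x * γ⁻¹ = 1  ⟹ x = γ/(1+γ)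
    have hx : xq γ (n+1) * (γ + 1) = γ := by
      field_simp at heq
      linarith
    field_simp
    nlinarith [hx]
  · -- M (n+1) = 2 * M n + 1
    have h2 : γ ^ (M (n+1)) = γ ^ (2 * M n) * γ := by
      rw [← pow_succ, ← hp]
    have hx2 : xq γ (n+1) = xq γ n ^ 2 * γ⁻¹ := by
      rw [hxn, xq, h2, mul_inv]
    rw [hx2] at heq ⊢
    have hx : xq γ n ^ 2 * (γ + 1) = γ := by
      field_simp at heq
      linarith
    field_simp
    nlinarith [hx]

/-- the key identity: `SV (U (n+1)) z = -γ/(1+γ)`. -/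
theorem t0_eq {n : ℕ} (heq : xq γ (n+1) + xq γ n ^ 2 = 1) :
    SV γ (U (n+1)) (zz γ n) = -γ / (1 + γ) := by
  have hgp := gpos hγ
  have hne : γ ≠ 0 := ne_of_gt hgp
  have h1γ : (0:ℝ) < 1 + γ := by linarith
  -- Pi n * (1 + γ) = γ ^ 2
  have hPi : Pi γ n * (1 + γ) = γ ^ 2 := by
    have h1 := Pi_sq hγ (γ := γ) n
    have h2 : xq γ (n+1) * xq γ n ^ 2 * γ ^ (M (n+1) + 2 * M n) = 1 := by
      rw [xq, xq, inv_pow, ← pow_mul, mul_comm (M n) 2, ← mul_inv, ← pow_add,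
        inv_mul_cancel₀ (by positivity : (γ : ℝ) ^ (M (n+1) + 2 * M n) ≠ 0)]
    have h3 := eq_prod hγ heq
    have hPi2 : Pi γ n ^ 2 = γ ^ 3 * (xq γ (n+1) * xq γ n ^ 2) := by
      calc Pi γ n ^ 2 = Pi γ n ^ 2 * (xq γ (n+1) * xq γ n ^ 2 * γ ^ (M (n+1) + 2 * M n)) := by
            rw [h2, mul_one]
        _ = (Pi γ n ^ 2 * γ ^ (M (n+1) + 2 * M n)) * (xq γ (n+1) * xq γ n ^ 2) := by ring
        _ = γ ^ 3 * (xq γ (n+1) * xq γ n ^ 2) := by rw [h1]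
    have hsq : (Pi γ n * (1 + γ)) ^ 2 = (γ ^ 2) ^ 2 := by
      calc (Pi γ n * (1 + γ)) ^ 2 = Pi γ n ^ 2 * (1 + γ) ^ 2 := by ring
        _ = γ ^ 3 * (xq γ (n+1) * xq γ n ^ 2 * (1 + γ) ^ 2) := by rw [hPi2]; ring
        _ = γ ^ 3 * γ := by rw [h3]
        _ = (γ ^ 2) ^ 2 := by ring
    have hp1 : 0 < Pi γ n * (1 + γ) := mul_pos (Pi_pos hγ n) h1γ
    have hp2 : (0:ℝ) < γ ^ 2 := by positivity
    have hfac : (Pi γ n * (1 + γ) - γ ^ 2) * (Pi γ n * (1 + γ) + γ ^ 2) = 0 := by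
      linear_combination hsq
    rcases mul_eq_zero.1 hfac with h | h
    · linarith
    · nlinarith
  -- SV (U (n+1)) z = A (n+1) - x_{n+1} z = Φ_n   (using the equation)
  have hz : SV γ (U (n+1)) (zz γ n) = Phi γ n := by
    rw [SV_U, Phi, zz]
    have hxe : xq γ (n+1) = 1 - xq γ n ^ 2 := by linarith
    have hd : (1 + xq γ n) ≠ 0 := ne_of_gt (one_xq_pos hγ n)
    rw [hxe]
    field_simp
    ring
  rw [hz, Phi_eq_Pi, eq_div_iff (ne_of_gt h1γ)]
  calc -γ⁻¹ * Pi γ n * (1 + γ) = -(γ⁻¹ * (Pi γ n * (1 + γ))) := by ring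
    _ = -(γ⁻¹ * γ ^ 2) := by rw [hPi]
    _ = -γ := by field_simp

end Ident
end NB


namespace NB

/-- the claimed orbit. -/
noncomputable def tau (γ : ℝ) (n k : ℕ) : ℝ :=
  if k < M (n+1) then SV γ (List.drop k (U (n+1))) (zz γ n)
  else SV γ (List.drop ((k - M (n+1)) % M n) (U n)) (zz γ n)

/-- the claimed digits. -/
def sdig (n k : ℕ) : ℕ :=
  if k < M (n+1) then (U (n+1)).getD k 0
  else (U n).getD ((k - M (n+1)) % M n) 0

section Final
variable {γ : ℝ} {n : ℕ} (hγ : 1 < γ)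

theorem lpt_eq : lpt (-γ) = -γ / (1 + γ) := by
  rw [lpt]
  ring_nf

include hγ

theorem SV_Un_z : SV γ (U n) (zz γ n) = zz γ n := by
  rw [SV_U, zz]
  have h2 : (1 + xq γ n) ≠ 0 := ne_of_gt (one_xq_pos hγ n)
  field_simp
  ring

theorem tau_drop {k : ℕ} (hk : k ≤ M (n+1)) :
    tau γ n k = SV γ (List.drop k (U (n+1))) (zz γ n) := by
  rcases Nat.lt_or_ge k (M (n+1)) with h | h
  · rw [tau, if_pos h]
  · have hk' : k = M (n+1) := by omega
    rw [tau, if_neg (by omega)]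
    subst hk'
    have hd : List.drop (M (n+1)) (U (n+1)) = [] := List.drop_eq_nil_of_le (le_refl _)
    rw [Nat.sub_self, Nat.zero_mod, List.drop_zero, hd, SV_nil, SV_Un_z hγ]

theorem tau_rec (k : ℕ) : (-γ) * tau γ n k = (sdig n k : ℝ) + tau γ n (k + 1) := by
  have hne : (-γ) ≠ 0 := by have := gpos hγ; intro h; nlinarith
  rcases Nat.lt_or_ge k (M (n+1)) with h | h
  · -- inside u_n
    have hkl : k < (U (n+1)).length := h
    have e : List.drop k (U (n+1)) = (U (n+1)).getD k 0 :: List.drop (k+1) (U (n+1)) := by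
      rw [List.drop_eq_getElem_cons hkl, List.getD_eq_getElem _ 0 hkl]
    rw [tau, if_pos h, e, SV_cons, mul_div_cancel₀ _ hne, sdig, if_pos h,
      tau_drop hγ (by omega : k + 1 ≤ M (n+1))]
  · -- periodic part
    have hm := M_pos n
    set j := (k - M (n+1)) % M n with hjdef
    have hj : j < M n := Nat.mod_lt _ (by omega)
    have hjl : j < (U n).length := hj
    have e : List.drop j (U n) = (U n).getD j 0 :: List.drop (j+1) (U n) := by
      rw [List.drop_eq_getElem_cons hjl, List.getD_eq_getElem _ 0 hjl]
    have hidx : (k + 1 - M (n+1)) % M n = (j + 1) % M n := by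
      rw [show k + 1 - M (n+1) = (k - M (n+1)) + 1 by omega, hjdef, Nat.mod_add_mod]
    have htk : (-γ) * tau γ n k = ((U n).getD j 0 : ℝ) + SV γ (List.drop (j+1) (U n)) (zz γ n) := by
      rw [tau, if_neg (by omega), ← hjdef, e, SV_cons, mul_div_cancel₀ _ hne]
    rw [htk, sdig, if_neg (by omega), ← hjdef]
    congr 1
    rw [tau, if_neg (by omega), hidx]
    rcases Nat.lt_or_ge (j+1) (M n) with h2 | h2
    · rw [Nat.mod_eq_of_lt h2]
    · have hj1 : j + 1 = M n := by omega
      have hd2 : List.drop (M n) (U n) = [] := List.drop_eq_nil_of_le (le_refl _)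
      rw [hj1, Nat.mod_self, List.drop_zero, SV_Un_z hγ, hd2, SV_nil]

theorem tau_mem {k : ℕ} (hk : 1 ≤ k) :
    zz γ n ≤ tau γ n k ∧ tau γ n k ≤ R γ n 0 := by
  have hzRn : zz γ n ≤ R γ n n := le_of_eq (R_n hγ).symm
  rcases Nat.lt_or_ge k (M (n+1)) with h | h
  · rw [tau, if_pos h]
    exact suf hγ (n+1) (le_refl _) (zz γ n) (le_refl _) (by simpa using hzRn) k hk h
  · rw [tau, if_neg (by omega)]
    set j := (k - M (n+1)) % M n with hjdef
    have hj : j < M n := Nat.mod_lt _ (by have := M_pos n; omega)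
    rcases Nat.eq_zero_or_pos j with h0 | h1
    · rw [h0, List.drop_zero, SV_Un_z hγ]
      refine ⟨le_refl _, ?_⟩
      calc zz γ n = R γ n n := (R_n hγ).symm
        _ ≤ R γ n 0 := R_anti hγ (Nat.zero_le n) (le_refl n)
    · have hzR : zz γ n ≤ R γ n (n - 1) := by
        calc zz γ n = R γ n n := (R_n hγ).symm
          _ ≤ R γ n (n - 1) := R_anti hγ (by omega) (le_refl n)
      exact suf hγ n (by omega) (zz γ n) (le_refl _) hzR j h1 hj

end Final
end NB

namespace NB
section Final2
variable {γ : ℝ} {n : ℕ} (hγ : 1 < γ) (heq : xq γ (n+1) + xq γ n ^ 2 = 1)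

include hγ heq

theorem l_lt_z : lpt (-γ) < zz γ n := by
  have h := t0_eq hγ heq
  rw [SV_U] at h
  rw [lpt_eq]
  have hdd := dd_pos hγ (γ := γ) n
  rw [dd] at hdd
  have hp := one_xq_pos hγ (γ := γ) n
  have hz' : zz γ n * (1 + xq γ n) = A γ n := by
    rw [zz]; field_simp
  have key : (zz γ n * (1 + xq γ (n+1)) - A γ (n+1)) * (1 + xq γ n)
      = A γ n * (1 + xq γ (n+1)) - A γ (n+1) * (1 + xq γ n) := by
    linear_combination (1 + xq γ (n+1)) * hz'
  have hpos : 0 < zz γ n * (1 + xq γ (n+1)) - A γ (n+1) := by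
    nlinarith [key, hdd, hp]
  have hx1 := xq_pos hγ (γ := γ) (n+1)
  nlinarith [h, hpos]

theorem R0_lt : R γ n 0 < lpt (-γ) + 1 := by
  have hz := l_lt_z hγ heq
  rw [lpt_eq] at *
  have hgp := gpos hγ
  have h1γ : (0:ℝ) < 1 + γ := by linarith
  have hR0 : R γ n 0 = -(γ⁻¹ * zz γ n) := by
    rw [R, A0, xq, M0, pow_one]; ring
  rw [hR0]
  have hz2 : -γ < zz γ n * (1 + γ) := by
    rw [div_lt_iff₀ h1γ] at hz
    linarith
  rw [show -γ / (1 + γ) + 1 = 1 / (1 + γ) by field_simp; ring, lt_div_iff₀ h1γ]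
  have hγi : (0:ℝ) < γ⁻¹ := by positivity
  calc -(γ⁻¹ * zz γ n) * (1 + γ) = γ⁻¹ * (-(zz γ n * (1 + γ))) := by ring
    _ < γ⁻¹ * γ := by apply mul_lt_mul_of_pos_left _ hγi; linarith
    _ = 1 := inv_mul_cancel₀ (ne_of_gt hgp)

theorem floor_digit (k : ℕ) : ⌊(-γ) * tau γ n k - lpt (-γ)⌋ = (sdig n k : ℤ) := by
  have hrec := tau_rec hγ (n := n) k
  obtain ⟨hm1, hm2⟩ := tau_mem hγ (n := n) (k := k + 1) (by omega)
  have hl := l_lt_z hγ heq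
  have hr := R0_lt hγ heq
  rw [Int.floor_eq_iff]
  constructor
  · push_cast
    rw [hrec]
    have : lpt (-γ) ≤ tau γ n (k+1) := le_trans (le_of_lt hl) hm1
    linarith
  · push_cast
    rw [hrec]
    have : tau γ n (k+1) < lpt (-γ) + 1 := lt_of_le_of_lt hm2 hr
    linarith

theorem iter_tau (k : ℕ) : (Tneg (-γ))^[k] (lpt (-γ)) = tau γ n k := by
  induction k with
  | zero =>
    have h0 : 0 < M (n+1) := M_pos (n+1)
    rw [Function.iterate_zero_apply, tau, if_pos h0, List.drop_zero, t0_eq hγ heq, lpt_eq]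
  | succ k ih =>
    rw [Function.iterate_succ_apply', ih, Tneg, floor_digit hγ heq, tau_rec hγ]
    push_cast
    ring

theorem dExp_eq (k : ℕ) : dExp (-γ) (lpt (-γ)) k = sdig n k := by
  rw [dExp, iter_tau hγ heq, floor_digit hγ heq, Int.toNat_natCast]

end Final2
end NB


namespace NB

theorem Lw_eq (n : ℕ) : Lw n = M (n+1) := by
  rw [Lw, uWord_eq_U]; rfl

theorem Lprev_eq (n : ℕ) : Lprev n = M n := by
  cases n with
  | zero => rfl
  | succ m => rw [Lprev, Lw_eq]

theorem uPrev_eq (n : ℕ) : uPrev n = U n := by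
  cases n with
  | zero => rfl
  | succ m => rw [uPrev, uWord_eq_U]

theorem getD_double (w : List ℕ) (hw : 1 ≤ w.length) (j : ℕ) :
    (w ++ w).getD (j % (2 * w.length)) 0 = w.getD (j % w.length) 0 := by
  set m := w.length with hm
  set r := j % (2 * m) with hr
  have hrlt : r < 2 * m := Nat.mod_lt _ (by omega)
  have hjm : j % m = r % m := by
    rw [hr, Nat.mod_mod_of_dvd j ⟨2, by ring⟩]
  rcases Nat.lt_or_ge r m with h | h
  · rw [List.getD_append _ _ _ _ (by omega : r < w.length), hjm, Nat.mod_eq_of_lt h]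
  · rw [List.getD_append_right _ _ _ _ (by omega : w.length ≤ r), hjm,
      Nat.mod_eq_sub_mod h, Nat.mod_eq_of_lt (by omega : r - m < m)]

theorem isGamma_xq {γ : ℝ} {n : ℕ} (h : IsGamma n γ) :
    1 < γ ∧ xq γ (n+1) + xq γ n ^ 2 = 1 := by
  obtain ⟨hγ, he⟩ := h
  refine ⟨hγ, ?_⟩
  have hcast : (-(2 * (Lprev n) : ℤ)) = (-(((2 * Lprev n : ℕ)) : ℤ)) := by push_cast; ring
  rw [hcast, zpow_neg, zpow_neg, zpow_natCast, zpow_natCast] at he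
  rw [xq, xq, ← Lw_eq, ← Lprev_eq, ← he]
  congr 1
  rw [inv_pow, ← pow_mul, mul_comm (Lprev n) 2]

theorem sdig_eq_stmt (n : ℕ) (i : ℕ) :
    (sdig n i : ℕ) =
      (if i < Lw n then (uWord n).getD i 0
       else (uPrev n ++ uPrev n).getD ((i - Lw n) % (2 * Lprev n)) 0) := by
  rw [sdig, Lw_eq, Lprev_eq, uPrev_eq, uWord_eq_U]
  rcases Nat.lt_or_ge i (M (n+1)) with h | h
  · rw [if_pos h, if_pos h]
  · rw [if_neg (by omega), if_neg (by omega)]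
    exact (getD_double (U n) (M_pos n) (i - M (n+1))).symm

end NB



/-- for each `n`, with `β = -γ_n`, the β-expansion of `l_β` is
`u_n (u_{n-1} u_{n-1})^∞`; in particular `d(l_{-γ_0}, -γ_0) = 1 0^∞`. -/
theorem expansion_at_minus_gamma :
    (∀ n : ℕ, ∀ γ : ℝ, IsGamma n γ →
      dExp (-γ) (lpt (-γ)) = fun i =>
        if i < Lw n then (uWord n).getD i 0
        else (uPrev n ++ uPrev n).getD ((i - Lw n) % (2 * Lprev n)) 0) ∧
    (∀ γ : ℝ, IsGamma 0 γ →
      dExp (-γ) (lpt (-γ)) = fun i => if i = 0 then 1 else 0) := by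
  have main : ∀ n : ℕ, ∀ γ : ℝ, IsGamma n γ →
      dExp (-γ) (lpt (-γ)) = fun i =>
        if i < Lw n then (uWord n).getD i 0
        else (uPrev n ++ uPrev n).getD ((i - Lw n) % (2 * Lprev n)) 0 := by
    intro n γ h
    obtain ⟨hγ, heq⟩ := NB.isGamma_xq h
    funext i
    rw [NB.dExp_eq hγ heq i, NB.sdig_eq_stmt n i]
  refine ⟨main, ?_⟩
  intro γ h
  rw [main 0 γ h]
  funext i
  rcases Nat.eq_zero_or_pos i with h0 | h1
  · subst h0
    simp [Lw, uWord, NB.M0]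
  · have hLw : Lw 0 = 1 := rfl
    rw [if_neg (by omega), if_neg (by omega)]
    show ([0] ++ [0]).getD ((i - Lw 0) % (2 * Lprev 0)) 0 = 0
    have h2 : (i - Lw 0) % (2 * Lprev 0) = 0 ∨ (i - Lw 0) % (2 * Lprev 0) = 1 := by
      have : (i - Lw 0) % (2 * Lprev 0) < 2 := Nat.mod_lt _ (by norm_num [Lprev])
      omega
    rcases h2 with h2 | h2 <;> rw [h2] <;> rfl
end

section
/- Let β < −1 and let d = (d_i)_{i≥1} = d(l_β, β) be the β-expansion of l_β. Assume d is not periodic with odd period, i.e. there is no odd integer p ≥ 1 with d_{i+p} = d_i for all i ≥ 1. Then for every K ∈ ℕ there exists p ∈ ℕ with 2p+1 ≥ K such that the periodic sequence w = (d_1 d_2 ⋯ d_{2p+1})^∞ (infinite repetition of the initial segment of length 2p+1) satisfies d ≼ σ^k(w) in the alternating order for every k ≥ 0. -/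
/- ### Combinatorial part -/

/-- Totality of the alternating order. -/
lemma altLe_total (x y : ℕ → ℕ) : AltLe x y ∨ AltLt y x := by
  classical
  by_cases h : x = y
  · exact Or.inl (Or.inr h)
  · have hne : ∃ i, x i ≠ y i := Function.ne_iff.mp h
    have hk : x (Nat.find hne) ≠ y (Nat.find hne) := Nat.find_spec hne
    have hag : ∀ i < Nat.find hne, x i = y i := fun i hi => not_not.mp (Nat.find_min hne hi)
    set k := Nat.find hne
    have hD : ((x k : ℤ) - y k) ≠ 0 := sub_ne_zero.mpr (by exact_mod_cast hk)
    have hs : ((-1 : ℤ) ^ (k + 1)) * ((x k : ℤ) - y k) ≠ 0 :=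
      mul_ne_zero (pow_ne_zero _ (by norm_num)) hD
    rcases hs.lt_or_gt with hlt | hgt
    · exact Or.inl (Or.inl ⟨k, hag, hlt⟩)
    · refine Or.inr ⟨k, fun i hi => (hag i hi).symm, ?_⟩
      have : ((-1 : ℤ) ^ (k + 1)) * ((y k : ℤ) - x k)
          = -(((-1 : ℤ) ^ (k + 1)) * ((x k : ℤ) - y k)) := by ring
      rw [this]; linarith

/-- From `x ≼ σ^k x`, the first disagreement (if any) carries a definite sign. -/
lemma Hsign (x : ℕ → ℕ) (H : ∀ k, 1 ≤ k → AltLe x (fun i => x (i + k)))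
    {k m : ℕ} (hk : 1 ≤ k) (hag : ∀ i < m, x i = x (i + k)) (hne : x m ≠ x (m + k)) :
    (-1 : ℤ) ^ (m + 1) * ((x m : ℤ) - (x (m + k) : ℤ)) < 0 := by
  rcases H k hk with hlt | heq
  · obtain ⟨m', hag', hs⟩ := hlt
    rcases lt_trichotomy m' m with h | h | h
    · exfalso
      have : x m' = x (m' + k) := hag m' h
      have hz : ((x m' : ℤ) - (x (m' + k) : ℤ)) = 0 := by
        have h9 : ((x m' : ℤ)) = (x (m' + k) : ℤ) := by exact_mod_cast this
        rw [h9, sub_self]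
      simp only [hz, mul_zero] at hs
      exact lt_irrefl 0 hs
    · subst h; exact hs
    · exact absurd (hag' m h) hne
  · exact absurd (congrFun heq m) hne

/-- Rule S: if `x` agrees with `σ^c x` up to `m` (first disagreement at `m`), `c` odd,
`e` even with `0 < e ≤ m`, then `x` disagrees with `σ^(c+e) x` at some `m' ≤ m - e`. -/
lemma ruleS (x : ℕ → ℕ) (H : ∀ k, 1 ≤ k → AltLe x (fun i => x (i + k)))
    {c e m : ℕ} (hc : Odd c) (he : e % 2 = 0) (he0 : 0 < e) (hem : e ≤ m)
    (hag : ∀ i < m, x i = x (i + c)) (hne : x m ≠ x (m + c)) :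
    ∃ m', m' + e ≤ m ∧ x m' ≠ x (m' + (c + e)) := by
  by_contra hcon
  push_neg at hcon
  set j := m - e with hj
  have hjm : j + e = m := by omega
  have h_i_e : ∀ i < j, x i = x (i + e) := by
    intro i hi
    have h1 : x i = x (i + (c + e)) := hcon i (by omega)
    have h2 : x (i + e) = x ((i + e) + c) := hag (i + e) (by omega)
    have h3 : i + (c + e) = (i + e) + c := by omega
    rw [h1, h3, ← h2]
  have h_j : x j = x (m + c) := by
    have h1 : x j = x (j + (c + e)) := hcon j (by omega)
    have h3 : j + (c + e) = m + c := by omega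
    rw [h1, h3]
  by_cases hjm2 : x j = x m
  · exact hne (hjm2.symm.trans h_j)
  · have hne' : x j ≠ x (j + e) := by rw [hjm]; exact hjm2
    have S1 := Hsign x H (by omega : 1 ≤ e) h_i_e hne'
    have S2 := Hsign x H hc.pos hag hne
    rw [hjm] at S1
    rw [← h_j] at S2
    have hpow : (-1 : ℤ) ^ (m + 1) = (-1 : ℤ) ^ (j + 1) := by
      have : m + 1 = (j + 1) + e := by omega
      rw [this, pow_add, (Nat.even_iff.mpr he).neg_one_pow, mul_one]
    rw [hpow] at S2
    have hz : (-1 : ℤ) ^ (j + 1) * ((x j : ℤ) - (x m : ℤ))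
        + (-1 : ℤ) ^ (j + 1) * ((x m : ℤ) - (x j : ℤ)) = 0 := by ring
    linarith

/-- Existence of arbitrarily large odd `n` whose prefix window has no odd period. -/
lemma exists_good (x : ℕ → ℕ) (H : ∀ k, 1 ≤ k → AltLe x (fun i => x (i + k)))
    (NP : ∀ c, Odd c → ∃ i, x i ≠ x (i + c)) (K : ℕ) :
    ∃ n, Odd n ∧ K ≤ n ∧ ∀ c, Odd c → c < n → ∃ i, i + c < n ∧ x i ≠ x (i + c) := by
  classical
  set F : ℕ → ℕ := fun c => if h : ∃ i, x i ≠ x (i + c) then Nat.find h else 0 with hF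
  have hFspec : ∀ c, Odd c → (∀ i < F c, x i = x (i + c)) ∧ x (F c) ≠ x (F c + c) := by
    intro c hc
    have h := NP c hc
    simp only [hF, dif_pos h]
    exact ⟨fun i hi => not_not.mp (Nat.find_min h hi), Nat.find_spec h⟩
  set s : Finset ℕ := (Finset.range (K + 2)).filter (fun c => c % 2 = 1) with hs
  have hsne : s.Nonempty := by
    refine ⟨if K % 2 = 1 then K else K + 1, ?_⟩
    simp only [hs, Finset.mem_filter, Finset.mem_range]
    split <;> omega
  obtain ⟨c₀, hc₀mem, hc₀⟩ := Finset.exists_mem_eq_sup s hsne (fun c => c + F c)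
  set G := s.sup (fun c => c + F c) with hG
  have hc₀odd : Odd c₀ := by
    have := (Finset.mem_filter.mp hc₀mem).2
    exact Nat.odd_iff.mpr this
  have hc₀K : c₀ < K + 2 := Finset.mem_range.mp (Finset.mem_filter.mp hc₀mem).1
  have hKG : K ≤ G := by
    have hmem : (if K % 2 = 1 then K else K + 1) ∈ s := by
      simp only [hs, Finset.mem_filter, Finset.mem_range]; split <;> omega
    have hle := Finset.le_sup (f := fun c => c + F c) hmem
    rw [← hG] at hle
    split at hle <;> omega
  refine ⟨if (G + 1) % 2 = 1 then G + 1 else G + 2, ?_, ?_, ?_⟩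
  · rw [Nat.odd_iff]; split <;> omega
  · split <;> omega
  · intro c hc hcn
    have hc1 : c % 2 = 1 := Nat.odd_iff.mp hc
    have hcG : c ≤ G := by
      by_cases hg : (G + 1) % 2 = 1
      · rw [if_pos hg] at hcn; omega
      · rw [if_neg hg] at hcn; omega
    have hgle : c + F c ≤ G := by
      by_cases hcK : c < K + 2
      · have hmem : c ∈ s := by
          simp only [hs, Finset.mem_filter, Finset.mem_range]; exact ⟨hcK, hc1⟩
        have hle := Finset.le_sup (f := fun c => c + F c) hmem
        simpa using hle
      · -- c > c₀, use rule S
        have hcc₀ : c₀ < c := by omega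
        have hcle : c ≤ c₀ + F c₀ := by omega
        obtain ⟨hag, hne⟩ := hFspec c₀ hc₀odd
        have hc₀1 : c₀ % 2 = 1 := Nat.odd_iff.mp hc₀odd
        obtain ⟨m', hm'le, hm'ne⟩ := ruleS x H hc₀odd
          (show (c - c₀) % 2 = 0 by omega) (show 0 < c - c₀ by omega)
          (show c - c₀ ≤ F c₀ by omega) hag hne
        have hceq : c₀ + (c - c₀) = c := by omega
        rw [hceq] at hm'ne
        have hex : ∃ i, x i ≠ x (i + c) := ⟨m', hm'ne⟩
        have hFc : F c ≤ m' := by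
          simp only [hF, dif_pos hex]
          exact Nat.find_min' hex hm'ne
        omega
    refine ⟨F c, by split <;> omega, (hFspec c hc).2⟩

/-- If the window `x_0 … x_{n-1}` (n odd) has no odd period, the periodization works. -/
lemma works (x : ℕ → ℕ) (H : ∀ k, 1 ≤ k → AltLe x (fun i => x (i + k)))
    {n : ℕ} (hodd : Odd n)
    (W : ∀ c, Odd c → c < n → ∃ i, i + c < n ∧ x i ≠ x (i + c)) :
    ∀ k, AltLe x (fun i => x ((i + k) % n)) := by
  intro k
  have hn : 0 < n := hodd.pos
  have hn1 : n % 2 = 1 := Nat.odd_iff.mp hodd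
  set c := k % n with hcdef
  have hcn : c < n := Nat.mod_lt _ hn
  have hrw : (fun i => x ((i + k) % n)) = (fun i => x ((i + c) % n)) := by
    funext i
    congr 1
    rw [hcdef, Nat.add_mod_mod]
  rw [hrw]
  rcases altLe_total x (fun i => x ((i + c) % n)) with h | hlt
  · exact h
  exfalso
  obtain ⟨m, hag0, hsign0⟩ := hlt
  have hag : ∀ i < m, x ((i + c) % n) = x i := hag0
  have hsign : (-1 : ℤ) ^ (m + 1) * ((x ((m + c) % n) : ℤ) - (x m : ℤ)) < 0 := hsign0
  clear hag0 hsign0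
  have hmne : x ((m + c) % n) ≠ x m := by
    intro he
    have h9 : ((x ((m + c) % n) : ℤ)) = (x m : ℤ) := by exact_mod_cast he
    rw [h9, sub_self, mul_zero] at hsign
    exact lt_irrefl 0 hsign
  rcases Nat.lt_or_ge (m + c) n with h1 | h1
  · -- Case 1 : m + c < n
    by_cases hc0 : c = 0
    · apply hmne
      congr 1
      rw [hc0, Nat.add_zero, Nat.mod_eq_of_lt (by omega)]
    · have hag' : ∀ i < m, x i = x (i + c) := by
        intro i hi
        have := hag i hi
        rwa [Nat.mod_eq_of_lt (by omega), eq_comm] at this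
      have hne' : x m ≠ x (m + c) := by
        have : (m + c) % n = m + c := Nat.mod_eq_of_lt h1
        rw [this] at hmne
        exact fun he => hmne he.symm
      have S1 := Hsign x H (by omega : 1 ≤ c) hag' hne'
      rw [Nat.mod_eq_of_lt h1] at hsign
      have hz : (-1 : ℤ) ^ (m + 1) * ((x m : ℤ) - (x (m + c) : ℤ))
          + (-1 : ℤ) ^ (m + 1) * ((x (m + c) : ℤ) - (x m : ℤ)) = 0 := by ring
      linarith
  · rcases Nat.lt_or_ge m n with h2 | h2
    · -- Case 2 : n ≤ m + c, m < n
      have hc1 : 1 ≤ c := by omega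
      by_cases hco : c % 2 = 1
      · obtain ⟨i₀, hi₀n, hi₀ne⟩ := W c (Nat.odd_iff.mpr hco) hcn
        have : x ((i₀ + c) % n) = x i₀ := hag i₀ (by omega)
        rw [Nat.mod_eq_of_lt hi₀n] at this
        exact hi₀ne this.symm
      · -- c even
        set j := n - c with hj
        have hjodd : j % 2 = 1 := by omega
        have hj1 : 1 ≤ j := by omega
        set d := m - j with hd
        have hdm : j + d = m := by omega
        have hdn : d < n := by omega
        have hagj : ∀ i < d, x i = x (i + j) := by
          intro i hi
          have h' := hag (j + i) (by omega)
          have : (j + i + c) % n = i := by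
            have : j + i + c = n + i := by omega
            rw [this, Nat.add_mod_left, Nat.mod_eq_of_lt (by omega)]
          rw [this] at h'
          rw [h', Nat.add_comm j i]
        have hym : (m + c) % n = d := by
          have : m + c = n + d := by omega
          rw [this, Nat.add_mod_left, Nat.mod_eq_of_lt hdn]
        rw [hym] at hmne hsign
        have hdne : x d ≠ x (d + j) := by
          rw [show d + j = m by omega]
          exact hmne
        have S1 := Hsign x H hj1 hagj hdne
        rw [show d + j = m by omega] at S1
        have hpow : (-1 : ℤ) ^ (m + 1) = -(-1 : ℤ) ^ (d + 1) := by
          have h5 : m + 1 = (d + 1) + j := by omega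
          rw [h5, pow_add, (Nat.odd_iff.mpr hjodd).neg_one_pow]
          ring
        rw [hpow] at hsign
        have hz : (-1 : ℤ) ^ (d + 1) * ((x d : ℤ) - (x m : ℤ))
            + -(-1 : ℤ) ^ (d + 1) * ((x d : ℤ) - (x m : ℤ)) = 0 := by ring
        linarith
    · -- Case 3 : n ≤ m
      by_cases hc0 : c = 0
      · rw [hc0] at hag hsign hmne
        set d := m - n with hd
        have hdm : d + n = m := by omega
        have hagn : ∀ i < d, x i = x (i + n) := by
          intro i hi
          have ha := hag i (by omega)
          have hb := hag (i + n) (by omega)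
          simp only [Nat.add_zero] at ha hb
          rw [show (i + n) % n = i % n from by rw [Nat.add_mod_right]] at hb
          rw [← ha, ← hb]
        have hymd : (m + 0) % n = d % n := by
          rw [Nat.add_zero, ← hdm, Nat.add_mod_right]
        have hxd : x (d % n) = x d := by
          have := hag d (by omega)
          simpa using this
        rw [hymd, hxd] at hmne hsign
        have hdne : x d ≠ x (d + n) := by rw [hdm]; exact hmne
        have S1 := Hsign x H (by omega : 1 ≤ n) hagn hdne
        rw [hdm] at S1
        have hpow : (-1 : ℤ) ^ (m + 1) = -(-1 : ℤ) ^ (d + 1) := by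
          have h5 : m + 1 = (d + 1) + n := by omega
          rw [h5, pow_add, (Nat.odd_iff.mpr hn1).neg_one_pow]
          ring
        rw [hpow] at hsign
        have hz : (-1 : ℤ) ^ (d + 1) * ((x d : ℤ) - (x m : ℤ))
            + -(-1 : ℤ) ^ (d + 1) * ((x d : ℤ) - (x m : ℤ)) = 0 := by ring
        linarith
      · -- c ≥ 1, m ≥ n : window has periods c and n - c, one of them odd
        have hperc : ∀ i, i + c < n → x i = x (i + c) := by
          intro i hi
          have := hag i (by omega)
          rwa [Nat.mod_eq_of_lt hi, eq_comm] at this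
        have hperj : ∀ i, i + (n - c) < n → x i = x (i + (n - c)) := by
          intro i hi
          have h' := hag (i + (n - c)) (by omega)
          have : (i + (n - c) + c) % n = i := by
            have he : i + (n - c) + c = n + i := by omega
            rw [he, Nat.add_mod_left, Nat.mod_eq_of_lt (by omega)]
          rw [this] at h'
          exact h'
        by_cases hco : c % 2 = 1
        · obtain ⟨i₀, hi₀n, hi₀ne⟩ := W c (Nat.odd_iff.mpr hco) hcn
          exact hi₀ne (hperc i₀ hi₀n)
        · have hjodd : Odd (n - c) := Nat.odd_iff.mpr (by omega)
          have hjn : n - c < n := by omega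
          obtain ⟨i₀, hi₀n, hi₀ne⟩ := W (n - c) hjodd hjn
          exact hi₀ne (hperj i₀ hi₀n)

/- ### Analytic part -/

lemma lpt_mul (β : ℝ) (hβ : β < -1) : β * (lpt β + 1) = lpt β := by
  have h : (1 : ℝ) - β ≠ 0 := by linarith
  unfold lpt
  field_simp
  ring

lemma Tneg_range (β s : ℝ) : lpt β ≤ Tneg β s ∧ Tneg β s < lpt β + 1 := by
  unfold Tneg
  have h1 : ((⌊β * s - lpt β⌋ : ℤ) : ℝ) ≤ β * s - lpt β := Int.floor_le _
  have h2 : β * s - lpt β < (⌊β * s - lpt β⌋ : ℤ) + 1 := Int.lt_floor_add_one _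
  exact ⟨by linarith, by linarith⟩

lemma floor_nn (β : ℝ) (hβ : β < -1) {t : ℝ} (ht : t < lpt β + 1) :
    0 ≤ ⌊β * t - lpt β⌋ := by
  apply Int.floor_nonneg.mpr
  have h1 := lpt_mul β hβ
  nlinarith [mul_pos (show (0:ℝ) < -β by linarith) (show (0:ℝ) < lpt β + 1 - t by linarith)]

lemma iter_range (β : ℝ) {t : ℝ} (h1 : lpt β ≤ t) (h2 : t < lpt β + 1) (i : ℕ) :
    lpt β ≤ (Tneg β)^[i] t ∧ (Tneg β)^[i] t < lpt β + 1 := by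
  induction i with
  | zero => exact ⟨h1, h2⟩
  | succ i ih =>
    rw [Function.iterate_succ_apply']
    exact Tneg_range β _

lemma dExp_le (β : ℝ) (hβ : β < -1) {t : ℝ} (h1 : lpt β ≤ t) (h2 : t < lpt β + 1) :
    AltLe (dExp β (lpt β)) (dExp β t) := by
  classical
  by_cases heq : dExp β (lpt β) = dExp β t
  · exact Or.inr heq
  have hex : ∃ i, dExp β (lpt β) i ≠ dExp β t i := Function.ne_iff.mp heq
  have hkspec : dExp β (lpt β) (Nat.find hex) ≠ dExp β t (Nat.find hex) := Nat.find_spec hex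
  have hkmin : ∀ i < Nat.find hex, dExp β (lpt β) i = dExp β t i :=
    fun i hi => not_not.mp (Nat.find_min hex hi)
  set k := Nat.find hex
  have hrl := iter_range β (le_refl (lpt β)) (by linarith)
  have hrt := iter_range β h1 h2
  have hfl : ∀ i, 0 ≤ ⌊β * (Tneg β)^[i] (lpt β) - lpt β⌋ := fun i => floor_nn β hβ (hrl i).2
  have hft : ∀ i, 0 ≤ ⌊β * (Tneg β)^[i] t - lpt β⌋ := fun i => floor_nn β hβ (hrt i).2
  have hdiff : ∀ i ≤ k, (Tneg β)^[i] t - (Tneg β)^[i] (lpt β) = β ^ i * (t - lpt β) := by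
    intro i hi
    induction i with
    | zero => simp
    | succ i ih =>
      have hd := ih (Nat.le_of_succ_le hi)
      have hdig : dExp β (lpt β) i = dExp β t i := hkmin i (Nat.lt_of_succ_le hi)
      have hfeq : ⌊β * (Tneg β)^[i] (lpt β) - lpt β⌋ = ⌊β * (Tneg β)^[i] t - lpt β⌋ := by
        simp only [dExp] at hdig
        have := hfl i
        have := hft i
        omega
      have hc : ((⌊β * (Tneg β)^[i] (lpt β) - lpt β⌋ : ℤ) : ℝ)
          = ((⌊β * (Tneg β)^[i] t - lpt β⌋ : ℤ) : ℝ) := by exact_mod_cast hfeq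
      rw [Function.iterate_succ_apply', Function.iterate_succ_apply']
      simp only [Tneg]
      rw [pow_succ]
      nlinarith [hd, hc]
  have hDk := hdiff k le_rfl
  have hfne : ⌊β * (Tneg β)^[k] (lpt β) - lpt β⌋ ≠ ⌊β * (Tneg β)^[k] t - lpt β⌋ := by
    intro h
    apply hkspec
    simp only [dExp, h]
  have htl : (0 : ℝ) ≤ t - lpt β := by linarith
  left
  refine ⟨k, hkmin, ?_⟩
  have e1 : ((dExp β (lpt β) k : ℤ)) = ⌊β * (Tneg β)^[k] (lpt β) - lpt β⌋ := by
    simp only [dExp]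
    exact Int.toNat_of_nonneg (hfl k)
  have e2 : ((dExp β t k : ℤ)) = ⌊β * (Tneg β)^[k] t - lpt β⌋ := by
    simp only [dExp]
    exact Int.toNat_of_nonneg (hft k)
  rcases Nat.even_or_odd k with hk2 | hk2
  · have hpow : (0 : ℝ) ≤ β ^ k := hk2.pow_nonneg β
    have h5 : (Tneg β)^[k] (lpt β) ≤ (Tneg β)^[k] t := by nlinarith [mul_nonneg hpow htl]
    have h6 : β * (Tneg β)^[k] t ≤ β * (Tneg β)^[k] (lpt β) := by nlinarith
    have h8 : ⌊β * (Tneg β)^[k] t - lpt β⌋ < ⌊β * (Tneg β)^[k] (lpt β) - lpt β⌋ :=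
      lt_of_le_of_ne (Int.floor_le_floor (by linarith)) (Ne.symm hfne)
    have hs : (-1 : ℤ) ^ (k + 1) = -1 := (hk2.add_one).neg_one_pow
    rw [hs, e1, e2]
    nlinarith [h8]
  · have hpow : β ^ k ≤ (0 : ℝ) := hk2.pow_nonpos (by linarith : β ≤ 0)
    have h5 : (Tneg β)^[k] t ≤ (Tneg β)^[k] (lpt β) := by nlinarith [mul_nonpos_of_nonpos_of_nonneg hpow htl]
    have h6 : β * (Tneg β)^[k] (lpt β) ≤ β * (Tneg β)^[k] t := by nlinarith
    have h8 : ⌊β * (Tneg β)^[k] (lpt β) - lpt β⌋ < ⌊β * (Tneg β)^[k] t - lpt β⌋ :=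
      lt_of_le_of_ne (Int.floor_le_floor (by linarith)) hfne
    have hs : (-1 : ℤ) ^ (k + 1) = 1 := (hk2.add_one).neg_one_pow
    rw [hs, e1, e2]
    nlinarith [h8]

lemma H_prop (β : ℝ) (hβ : β < -1) :
    ∀ k, 1 ≤ k → AltLe (dExp β (lpt β)) (fun i => dExp β (lpt β) (i + k)) := by
  intro k hk
  have hr := iter_range β (le_refl (lpt β)) (by linarith) k
  have hfun : dExp β ((Tneg β)^[k] (lpt β)) = fun i => dExp β (lpt β) (i + k) := by
    funext i
    simp only [dExp]
    rw [← Function.iterate_add_apply]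
  rw [← hfun]
  exact dExp_le β hβ hr.1 hr.2

/-- let `β < -1` and `d = d(l_β, β)`, not periodic with odd period.  Then for
every `K` there is `p` with `2p+1 ≥ K` such that the periodic sequence
`w = (d_1 ⋯ d_{2p+1})^∞` satisfies `d ≼ σ^k(w)` in the alternating order for all `k ≥ 0`. -/
theorem exists_admissible_odd_periodic (β : ℝ) (hβ : β < -1)
    (hper : ¬ ∃ p : ℕ, Odd p ∧ 1 ≤ p ∧
      ∀ i : ℕ, dExp β (lpt β) (i + p) = dExp β (lpt β) i)
    (K : ℕ) :
    ∃ p : ℕ, K ≤ 2 * p + 1 ∧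
      ∀ k : ℕ, AltLe (dExp β (lpt β))
        (fun i => dExp β (lpt β) ((i + k) % (2 * p + 1))) := by
  classical
  set x := dExp β (lpt β) with hx
  have H : ∀ k, 1 ≤ k → AltLe x (fun i => x (i + k)) := H_prop β hβ
  have NP : ∀ c, Odd c → ∃ i, x i ≠ x (i + c) := by
    intro c hc
    by_contra h
    push_neg at h
    exact hper ⟨c, hc, hc.pos, fun i => (h i).symm⟩
  obtain ⟨n, hodd, hKn, hgood⟩ := exists_good x H NP K
  obtain ⟨p, hp⟩ := hodd
  refine ⟨p, by omega, ?_⟩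
  intro k
  have hres := works x H ⟨p, hp⟩ hgood k
  rw [← hp]
  exact hres
end
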